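/- arXiv:1510.04922 — 7 statements merged into one kernel-verified Lean document; each statement's English description precedes it below -/
import Mathlib

section
/- Let i ≥ 2. In the ring S_i, the annihilator of the maximal ideal 𝔫_i = (x, y_1, …, y_i) is equal to the ideal generated by the elements x·y_1, x·y_2, …, x·y_i (equivalently, ann(𝔫_i) = 𝔫_i²). -/
set_option synthInstance.maxHeartbeats 1000000
set_option maxHeartbeats 1000000

open MvPolynomial

noncomputable section

/-- The defining ideal `(X², (Y₁,…,Y_i)²)` of `S_i` in `k[X,Y₁,…,Y_i]`;
the variable `X 0` plays the role of `X` and `X j.succ` the role of `Y_j`. -/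
abbrev SIdeal (k : Type) [Field k] (i : ℕ) : Ideal (MvPolynomial (Fin (i + 1)) k) :=
  Ideal.span ({X 0 ^ 2} ∪ {p | ∃ a b : Fin i, p = X a.succ * X b.succ})

/-- `S_i = k[X,Y₁,…,Y_i]/(X², (Y₁,…,Y_i)²)`. -/
abbrev Sring (k : Type) [Field k] (i : ℕ) := MvPolynomial (Fin (i + 1)) k ⧸ SIdeal k i

/-- `x`, the residue class of `X` in `S_i`. -/
abbrev xS (k : Type) [Field k] (i : ℕ) : Sring k i := Ideal.Quotient.mk _ (X 0)

/-- `y_j`, the residue class of `Y_j` in `S_i`. -/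
abbrev yS (k : Type) [Field k] (i : ℕ) (j : Fin i) : Sring k i :=
  Ideal.Quotient.mk _ (X j.succ)

/-- The maximal ideal `𝔫_i = (x, y₁, …, y_i)` of `S_i`. -/
abbrev nS (k : Type) [Field k] (i : ℕ) : Ideal (Sring k i) :=
  Ideal.span ({xS k i} ∪ Set.range (yS k i))

/-!
`SIdeal k i` is a monomial ideal, so membership is decided monomial by monomial, and
`p` annihilates `𝔫_i` iff for every monomial `m` of `p` all the products `m·x`, `m·y_j` lie
in it. If `m` is divisible neither by `x` nor by any `y_j`, the relation dividing `m·x`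
(resp. `m·y_1`) does not involve the new factor and so already divides `m`. Hence modulo
`SIdeal k i` only monomials divisible by some `x·y_j` survive.
-/

section

variable {k : Type} [Field k] {i : ℕ}

def relExponents (i : ℕ) : Set (Fin (i + 1) →₀ ℕ) :=
  {Finsupp.single 0 2} ∪ Set.range fun ab : Fin i × Fin i =>
    Finsupp.single ab.1.succ 1 + Finsupp.single ab.2.succ 1

theorem SIdeal_eq_span_monomial :
    SIdeal k i = Ideal.span ((fun s => monomial s (1 : k)) '' relExponents i) := by
  refine congrArg Ideal.span ?_
  rw [relExponents, Set.image_union, Set.image_singleton, ← X_pow_eq_monomial, ← Set.range_comp]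
  congr 1
  ext p
  simp [X, monomial_mul, eq_comm]

theorem mem_SIdeal_iff {p : MvPolynomial (Fin (i + 1)) k} :
    p ∈ SIdeal k i ↔ ∀ m ∈ p.support, ∃ b ∈ relExponents i, b ≤ m := by
  rw [SIdeal_eq_span_monomial, mem_ideal_span_monomial_image]

theorem monomial_mem_SIdeal {m b : Fin (i + 1) →₀ ℕ} (hb : b ∈ relExponents i) (hbm : b ≤ m)
    (c : k) : monomial m c ∈ SIdeal k i :=
  mem_SIdeal_iff.2 fun m' hm' => by
    rw [Finset.mem_singleton.1 (support_monomial_subset hm')]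
    exact ⟨b, hb, hbm⟩

theorem mul_X_mem_SIdeal_iff {p : MvPolynomial (Fin (i + 1)) k} {v : Fin (i + 1)} :
    p * X v ∈ SIdeal k i ↔
      ∀ m ∈ p.support, ∃ b ∈ relExponents i, b ≤ m + Finsupp.single v 1 := by
  rw [mem_SIdeal_iff]
  simp

theorem Finsupp.le_of_le_add_single {σ : Type*} {b m : σ →₀ ℕ} {v : σ}
    (h : b ≤ m + Finsupp.single v 1) (hv : b v ≤ m v) : b ≤ m := by
  intro w
  rcases eq_or_ne w v with rfl | hw
  · exact hv
  · simpa [Finsupp.single_apply, Ne.symm hw] using h w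

theorem relExponents_le_of_le_add_single_zero {b m : Fin (i + 1) →₀ ℕ}
    (hb : b ∈ relExponents i) (hm : m 0 = 0) (h : b ≤ m + Finsupp.single 0 1) : b ≤ m := by
  refine Finsupp.le_of_le_add_single h ?_
  rcases hb with rfl | ⟨⟨a, c⟩, rfl⟩
  · simpa [hm] using h 0
  · simp [Fin.succ_ne_zero]

theorem relExponents_le_of_le_add_single_succ {b m : Fin (i + 1) →₀ ℕ} {j : Fin i}
    (hb : b ∈ relExponents i) (hm : ∀ l : Fin i, m l.succ = 0)
    (h : b ≤ m + Finsupp.single j.succ 1) : b ≤ m := by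
  refine Finsupp.le_of_le_add_single h ?_
  rcases hb with rfl | ⟨⟨a, c⟩, rfl⟩
  · simp [Fin.succ_ne_zero]
  · have ha := h a.succ
    have hc := h c.succ
    simp only [Finsupp.coe_add, Pi.add_apply, Finsupp.single_apply, Fin.succ_inj, hm] at ha hc
    split_ifs at ha hc <;> omega

theorem nS_eq_span_range_mk_X :
    nS k i = Ideal.span (Set.range fun v => Ideal.Quotient.mk (SIdeal k i) (X v)) := by
  rw [Fin.range_fin_succ, Set.insert_eq]
  rfl

theorem mk_mem_annihilator_nS_iff {p : MvPolynomial (Fin (i + 1)) k} :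
    Ideal.Quotient.mk (SIdeal k i) p ∈ (nS k i).annihilator ↔ ∀ v, p * X v ∈ SIdeal k i := by
  rw [nS_eq_span_range_mk_X, Submodule.mem_annihilator_span]
  simp [← map_mul, Ideal.Quotient.eq_zero_iff_mem]

theorem X_zero_mul_X_succ_mul_X_mem_SIdeal (j : Fin i) (v : Fin (i + 1)) :
    X 0 * X j.succ * X v ∈ SIdeal k i := by
  cases v using Fin.cases with
  | zero =>
    rw [mul_right_comm, ← sq]
    exact Ideal.mul_mem_right _ _ (Ideal.subset_span (Or.inl rfl))
  | succ l =>
    rw [mul_assoc]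
    exact Ideal.mul_mem_left _ _ (Ideal.subset_span (Or.inr ⟨j, l, rfl⟩))

theorem single_zero_add_single_succ_le {m : Fin (i + 1) →₀ ℕ} {j : Fin i} (h0 : m 0 ≠ 0)
    (hj : m j.succ ≠ 0) : Finsupp.single 0 1 + Finsupp.single j.succ 1 ≤ m := by
  intro w
  simp only [Finsupp.coe_add, Pi.add_apply, Finsupp.single_apply]
  split_ifs <;> subst_vars <;> simp_all [Fin.succ_ne_zero] <;> omega

theorem mk_monomial_mem_span_xS_mul_yS (hi : i ≠ 0) {m : Fin (i + 1) →₀ ℕ} (c : k)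
    (h : ∀ v, ∃ b ∈ relExponents i, b ≤ m + Finsupp.single v 1) :
    Ideal.Quotient.mk (SIdeal k i) (monomial m c) ∈
      Ideal.span (Set.range fun j : Fin i => xS k i * yS k i j) := by
  have mk_eq_zero {b} (hb : b ∈ relExponents i) (hbm : b ≤ m) :
      Ideal.Quotient.mk (SIdeal k i) (monomial m c) = 0 :=
    Ideal.Quotient.eq_zero_iff_mem.2 (monomial_mem_SIdeal hb hbm c)
  by_cases h0 : m 0 = 0
  · obtain ⟨b, hb, hbm⟩ := h 0
    rw [mk_eq_zero hb (relExponents_le_of_le_add_single_zero hb h0 hbm)]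
    exact zero_mem _
  by_cases hy : ∀ j : Fin i, m j.succ = 0
  · obtain ⟨b, hb, hbm⟩ := h (Fin.succ ⟨0, Nat.pos_of_ne_zero hi⟩)
    rw [mk_eq_zero hb (relExponents_le_of_le_add_single_succ hb hy hbm)]
    exact zero_mem _
  push Not at hy
  obtain ⟨j, hj⟩ := hy
  obtain ⟨n, rfl⟩ := exists_add_of_le (single_zero_add_single_succ_le h0 hj)
  have hfactor : monomial (Finsupp.single 0 1 + Finsupp.single j.succ 1 + n) c =
      X 0 * X j.succ * monomial n c := by
    rw [X, X, monomial_mul, monomial_mul, one_mul, one_mul]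
  rw [hfactor, map_mul, map_mul]
  exact Ideal.mul_mem_right _ _ (Ideal.subset_span ⟨j, rfl⟩)

end

theorem stmt0_general (k : Type) [Field k] (i : ℕ) (hi : 2 ≤ i) :
    (nS k i).annihilator = Ideal.span (Set.range fun j : Fin i => xS k i * yS k i j) := by
  apply le_antisymm
  · intro s hs
    obtain ⟨p, rfl⟩ := Ideal.Quotient.mk_surjective s
    have hpX := mk_mem_annihilator_nS_iff.1 hs
    rw [p.as_sum, map_sum]
    exact Ideal.sum_mem _ fun m hm =>
      mk_monomial_mem_span_xS_mul_yS (by omega) _ fun v => mul_X_mem_SIdeal_iff.1 (hpX v) m hm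
  · rw [Ideal.span_le]
    rintro _ ⟨j, rfl⟩
    exact mk_mem_annihilator_nS_iff.2 (X_zero_mul_X_succ_mul_X_mem_SIdeal j)

/-- For `i ≥ 2`, the annihilator of the maximal ideal `𝔫_i = (x, y₁, …, y_i)`
of `S_i` equals the ideal generated by `x·y₁, …, x·y_i`. -/
theorem stmt0 (k : Type) [Field k] [CharZero k] (i : ℕ) (hi : 2 ≤ i) :
    (nS k i).annihilator = Ideal.span (Set.range fun j : Fin i => xS k i * yS k i j) :=
  stmt0_general k i hi
end
end

section
/- Let i ≥ 2. The annihilator of the maximal ideal 𝔫_i of S_i, viewed as a k-vector space, has dimension exactly i over k. -/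
set_option synthInstance.maxHeartbeats 1000000
set_option maxHeartbeats 1000000

open MvPolynomial

noncomputable section

namespace Stmt1Aux

def Bad (i : ℕ) (d : Fin (i+1) →₀ ℕ) : Prop :=
  2 ≤ d 0 ∨ ∃ a b : Fin i, Finsupp.single a.succ 1 + Finsupp.single b.succ 1 ≤ d

variable {k : Type} [Field k] {i : ℕ}

lemma X_mul_X_eq (a b : Fin (i+1)) :
    (X a * X b : MvPolynomial (Fin (i+1)) k)
      = monomial (Finsupp.single a 1 + Finsupp.single b 1) 1 := by
  rw [← pow_one (X a), ← pow_one (X b), X_pow_eq_monomial, X_pow_eq_monomial,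
    monomial_mul, mul_one]

lemma gen_set_eq :
    ({X 0 ^ 2} ∪ {p | ∃ a b : Fin i, p = X a.succ * X b.succ} :
        Set (MvPolynomial (Fin (i+1)) k)) =
      (fun s => monomial s (1 : k)) ''
      ({Finsupp.single 0 2} ∪
        {d | ∃ a b : Fin i, d = Finsupp.single a.succ 1 + Finsupp.single b.succ 1}) := by
  rw [Set.image_union, Set.image_singleton]
  congr 1
  · rw [X_pow_eq_monomial]
  · ext p
    simp only [Set.mem_setOf_eq, Set.mem_image]
    constructor
    · rintro ⟨a, b, rfl⟩
      exact ⟨_, ⟨a, b, rfl⟩, (X_mul_X_eq a.succ b.succ).symm⟩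
    · rintro ⟨d, ⟨a, b, rfl⟩, rfl⟩
      exact ⟨a, b, (X_mul_X_eq a.succ b.succ).symm⟩

lemma sideal_eq :
    SIdeal k i = Ideal.span ((fun s => monomial s (1 : k)) ''
      ({Finsupp.single 0 2} ∪
        {d | ∃ a b : Fin i, d = Finsupp.single a.succ 1 + Finsupp.single b.succ 1})) := by
  unfold SIdeal
  rw [gen_set_eq]

lemma mem_SIdeal_iff {p : MvPolynomial (Fin (i+1)) k} :
    p ∈ SIdeal k i ↔ ∀ d ∈ p.support, Bad i d := by
  rw [sideal_eq, mem_ideal_span_monomial_image]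
  refine forall₂_congr fun d _ => ?_
  unfold Bad
  constructor
  · rintro ⟨s, hs | hs, hle⟩
    · rw [Set.mem_singleton_iff] at hs
      subst hs
      exact Or.inl (Finsupp.single_le_iff.mp hle)
    · obtain ⟨a, b, rfl⟩ := hs
      exact Or.inr ⟨a, b, hle⟩
  · rintro (h | ⟨a, b, h⟩)
    · exact ⟨_, Or.inl rfl, Finsupp.single_le_iff.mpr h⟩
    · exact ⟨_, Or.inr ⟨a, b, rfl⟩, h⟩

-- coordinate helpers
lemma succ_apply_zero (a : Fin i) (n : ℕ) :
    (Finsupp.single a.succ n : Fin (i+1) →₀ ℕ) 0 = 0 := by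
  simp [Finsupp.single_apply, Fin.succ_ne_zero]

lemma succ_apply_succ (a b : Fin i) (n : ℕ) :
    (Finsupp.single a.succ n : Fin (i+1) →₀ ℕ) b.succ = if a = b then n else 0 := by
  simp [Finsupp.single_apply, Fin.succ_inj]

lemma zero_apply_succ (b : Fin i) (n : ℕ) :
    (Finsupp.single (0 : Fin (i+1)) n : Fin (i+1) →₀ ℕ) b.succ = 0 := by
  simp [Finsupp.single_apply, (Fin.succ_ne_zero b).symm]

lemma pair_le {a b : Fin i} {d : Fin (i+1) →₀ ℕ} (hab : a ≠ b)
    (ha : 1 ≤ d a.succ) (hb : 1 ≤ d b.succ) :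
    Finsupp.single a.succ 1 + Finsupp.single b.succ 1 ≤ d := by
  rw [Finsupp.le_def]
  intro s
  rcases Fin.eq_zero_or_eq_succ s with rfl | ⟨m, rfl⟩
  · simp [succ_apply_zero]
  · rw [Finsupp.add_apply, succ_apply_succ, succ_apply_succ]
    rcases eq_or_ne a m with rfl | h1
    · rw [if_pos rfl, if_neg (fun h => hab h.symm)]
      simpa using ha
    · rw [if_neg h1]
      rcases eq_or_ne b m with rfl | h2
      · simpa using hb
      · simp [h2]

lemma sq_le {a : Fin i} {d : Fin (i+1) →₀ ℕ} (h : 2 ≤ d a.succ) :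
    Finsupp.single a.succ 1 + Finsupp.single a.succ 1 ≤ d := by
  rw [Finsupp.le_def]
  intro s
  rcases Fin.eq_zero_or_eq_succ s with rfl | ⟨m, rfl⟩
  · simp [succ_apply_zero]
  · rw [Finsupp.add_apply, succ_apply_succ]
    rcases eq_or_ne a m with rfl | h1
    · simp only [eq_self_iff_true, if_true]; omega
    · simp [h1]

lemma not_bad_e0 (j : Fin i) :
    ¬ Bad i (Finsupp.single 0 1 + Finsupp.single j.succ 1) := by
  rintro (h | ⟨a, b, hle⟩)
  · rw [Finsupp.add_apply, succ_apply_zero] at h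
    simp at h
  · have ha := Finsupp.le_def.mp hle a.succ
    have hb := Finsupp.le_def.mp hle b.succ
    simp only [Finsupp.add_apply, succ_apply_succ, zero_apply_succ, zero_add,
      eq_self_iff_true, if_true] at ha hb
    rcases eq_or_ne j a with rfl | h1
    · rcases eq_or_ne j b with rfl | h2
      · simp only [eq_self_iff_true, if_true] at ha
        omega
      · simp only [if_neg h2, if_neg (fun h : j = b => h2 h)] at hb
        omega
    · simp only [if_neg h1] at ha
      split_ifs at ha <;> omega

lemma good_shape {d : Fin (i+1) →₀ ℕ} (j₀ : Fin i)
    (hgood : ¬ Bad i d) (h0 : Bad i (d + Finsupp.single 0 1))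
    (hj : Bad i (d + Finsupp.single j₀.succ 1)) :
    ∃ c : Fin i, d = Finsupp.single 0 1 + Finsupp.single c.succ 1 := by
  have hd0le : ¬ 2 ≤ d 0 := fun h => hgood (Or.inl h)
  have hnopair : ∀ a b : Fin i,
      ¬ (Finsupp.single a.succ 1 + Finsupp.single b.succ 1 ≤ d) :=
    fun a b h => hgood (Or.inr ⟨a, b, h⟩)
  have hsq : ∀ a : Fin i, d a.succ ≤ 1 := by
    intro a
    by_contra h
    exact hnopair a a (sq_le (by omega))
  have honce : ∀ a b : Fin i, a ≠ b → d a.succ = 0 ∨ d b.succ = 0 := by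
    intro a b hab
    by_contra h
    push_neg at h
    exact hnopair a b (pair_le hab (by omega) (by omega))
  -- d 0 = 1
  have hd0 : d 0 = 1 := by
    rcases h0 with h | ⟨a, b, hle⟩
    · rw [Finsupp.add_apply, Finsupp.single_apply, if_pos rfl] at h
      omega
    · exfalso
      apply hnopair a b
      rw [Finsupp.le_def]
      intro s
      have hs := Finsupp.le_def.mp hle s
      rcases Fin.eq_zero_or_eq_succ s with rfl | ⟨m, rfl⟩
      · rw [Finsupp.add_apply, succ_apply_zero, succ_apply_zero]
        omega
      · rw [Finsupp.add_apply, Finsupp.add_apply, zero_apply_succ] at hs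
        rw [Finsupp.add_apply]
        omega
  -- some off-coordinate is positive
  have hc : ∃ c : Fin i, 1 ≤ d c.succ := by
    rcases hj with h | ⟨a, b, hle⟩
    · rw [Finsupp.add_apply, succ_apply_zero] at h
      omega
    · have ha := Finsupp.le_def.mp hle a.succ
      have hb := Finsupp.le_def.mp hle b.succ
      simp only [Finsupp.add_apply, succ_apply_succ, eq_self_iff_true, if_true] at ha hb
      by_contra hno
      push_neg at hno
      have hna := hno a
      have hnb := hno b
      split_ifs at ha hb <;> omega
  obtain ⟨c, hc⟩ := hc
  refine ⟨c, ?_⟩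
  ext s
  rcases Fin.eq_zero_or_eq_succ s with rfl | ⟨m, rfl⟩
  · rw [Finsupp.add_apply, Finsupp.single_apply, if_pos rfl, succ_apply_zero, hd0]
  · rw [Finsupp.add_apply, zero_apply_succ, succ_apply_succ, zero_add]
    rcases eq_or_ne c m with rfl | hcm
    · rw [if_pos rfl]
      have := hsq c
      omega
    · rw [if_neg hcm]
      rcases honce c m hcm with h | h
      · omega
      · exact h

lemma xy_mem_ann (j : Fin i) : xS k i * yS k i j ∈ (nS k i).annihilator := by
  refine (Submodule.mem_annihilator_span _ _).mpr ?_
  rintro ⟨n, hn | ⟨l, rfl⟩⟩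
  · rw [Set.mem_singleton_iff] at hn
    subst hn
    show xS k i * yS k i j * xS k i = 0
    rw [← map_mul, ← map_mul, Ideal.Quotient.eq_zero_iff_mem]
    have h : (X 0 * X j.succ * X 0 : MvPolynomial (Fin (i+1)) k) = X 0 ^ 2 * X j.succ := by
      ring
    rw [h]
    exact Ideal.mul_mem_right _ _ (Ideal.subset_span (Set.mem_union_left _ rfl))
  · show xS k i * yS k i j * yS k i l = 0
    rw [← map_mul, ← map_mul, Ideal.Quotient.eq_zero_iff_mem]
    have h : (X 0 * X j.succ * X l.succ : MvPolynomial (Fin (i+1)) k)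
        = X 0 * (X j.succ * X l.succ) := by ring
    rw [h]
    exact Ideal.mul_mem_left _ _ (Ideal.subset_span (Set.mem_union_right _ ⟨j, l, rfl⟩))

lemma ann_eq (hi : 0 < i) :
    Submodule.restrictScalars k (nS k i).annihilator =
      Submodule.span k (Set.range fun j : Fin i => xS k i * yS k i j) := by
  apply le_antisymm
  · intro z hz
    rw [Submodule.restrictScalars_mem] at hz
    have hzx : z * xS k i = 0 := by
      have h := Submodule.mem_annihilator.mp hz (xS k i)
        (Ideal.subset_span (Set.mem_union_left _ rfl))
      rwa [smul_eq_mul] at h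
    have hzy : ∀ j : Fin i, z * yS k i j = 0 := by
      intro j
      have h := Submodule.mem_annihilator.mp hz (yS k i j)
        (Ideal.subset_span (Set.mem_union_right _ ⟨j, rfl⟩))
      rwa [smul_eq_mul] at h
    obtain ⟨p, rfl⟩ := Ideal.Quotient.mk_surjective z
    have hx : ∀ d ∈ p.support, Bad i (d + Finsupp.single 0 1) := by
      intro d hd
      have h0 : p * X 0 ∈ SIdeal k i := by
        rw [← Ideal.Quotient.eq_zero_iff_mem, map_mul]
        exact hzx
      refine mem_SIdeal_iff.mp h0 (d + Finsupp.single 0 1) ?_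
      rw [support_mul_X]
      exact Finset.mem_map_of_mem _ hd
    have hy : ∀ j : Fin i, ∀ d ∈ p.support, Bad i (d + Finsupp.single j.succ 1) := by
      intro j d hd
      have h0 : p * X j.succ ∈ SIdeal k i := by
        rw [← Ideal.Quotient.eq_zero_iff_mem, map_mul]
        exact hzy j
      refine mem_SIdeal_iff.mp h0 (d + Finsupp.single j.succ 1) ?_
      rw [support_mul_X]
      exact Finset.mem_map_of_mem _ hd
    rw [show (Ideal.Quotient.mk (SIdeal k i)) p
        = ∑ d ∈ p.support, (Ideal.Quotient.mk (SIdeal k i)) (monomial d (coeff d p)) by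
      rw [← map_sum, ← as_sum]]
    apply Submodule.sum_mem
    intro d hd
    by_cases hbad : Bad i d
    · have hm : (monomial d (coeff d p)) ∈ SIdeal k i := by
        refine mem_SIdeal_iff.mpr fun e he => ?_
        have : e = d := Finset.mem_singleton.mp (support_monomial_subset he)
        exact this ▸ hbad
      rw [Ideal.Quotient.eq_zero_iff_mem.mpr hm]
      exact zero_mem _
    · obtain ⟨c, hdc⟩ := good_shape ⟨0, hi⟩ hbad (hx d hd) (hy ⟨0, hi⟩ d hd)
      have h1 : (monomial d (coeff d p))
          = coeff d p • (X 0 * X c.succ : MvPolynomial (Fin (i+1)) k) := by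
        rw [X_mul_X_eq, smul_monomial, smul_eq_mul, mul_one, hdc]
      rw [h1, ← Ideal.Quotient.mkₐ_eq_mk k, map_smul]
      refine Submodule.smul_mem _ _ (Submodule.subset_span ⟨c, ?_⟩)
      rw [Ideal.Quotient.mkₐ_eq_mk, map_mul]
  · rw [Submodule.span_le]
    rintro _ ⟨j, rfl⟩
    exact xy_mem_ann j

lemma linIndep : LinearIndependent k fun j : Fin i => xS k i * yS k i j := by
  rw [Fintype.linearIndependent_iff]
  intro g hg j
  by_contra hgj
  have hq : (∑ l : Fin i, g l • (X 0 * X l.succ : MvPolynomial (Fin (i+1)) k))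
      ∈ SIdeal k i := by
    rw [← Ideal.Quotient.eq_zero_iff_mem, ← Ideal.Quotient.mkₐ_eq_mk k, map_sum]
    simp only [map_smul, Ideal.Quotient.mkₐ_eq_mk, map_mul]
    exact hg
  have hco : coeff (Finsupp.single 0 1 + Finsupp.single j.succ 1)
      (∑ l : Fin i, g l • (X 0 * X l.succ : MvPolynomial (Fin (i+1)) k)) = g j := by
    rw [coeff_sum]
    have h : ∀ l : Fin i, coeff (Finsupp.single 0 1 + Finsupp.single j.succ 1)
        (g l • (X 0 * X l.succ : MvPolynomial (Fin (i+1)) k))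
          = if l = j then g j else 0 := by
      intro l
      rw [coeff_smul, X_mul_X_eq, coeff_monomial]
      rcases eq_or_ne l j with rfl | h
      · simp
      · rw [if_neg h, if_neg, smul_zero]
        intro heq
        exact h (Fin.succ_injective _
          (Finsupp.single_left_injective one_ne_zero (add_left_cancel heq)))
    rw [Finset.sum_congr rfl fun l _ => h l]
    simp
  have hsup : (Finsupp.single 0 1 + Finsupp.single j.succ 1)
      ∈ (∑ l : Fin i, g l • (X 0 * X l.succ : MvPolynomial (Fin (i+1)) k)).support :=
    mem_support_iff.mpr (by rw [hco]; exact hgj)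
  exact not_bad_e0 j (mem_SIdeal_iff.mp hq _ hsup)

end Stmt1Aux

/-- For `i ≥ 2`, the annihilator of the maximal ideal `𝔫_i` of `S_i`,
viewed as a `k`-vector space, has dimension exactly `i` over `k`. -/
theorem stmt1 (k : Type) [Field k] [CharZero k] (i : ℕ) (hi : 2 ≤ i) :
    Module.finrank k (Submodule.restrictScalars k (nS k i).annihilator) = i := by
  rw [Stmt1Aux.ann_eq (by omega), finrank_span_eq_card Stmt1Aux.linIndep, Fintype.card_fin]
end
end

section
/- Let i ≥ 2 and let a, b_1, …, b_i ∈ k with a ≠ 0. Set s = a·x + b_1·y_1 + ⋯ + b_i·y_i and t = a·x − b_1·y_1 − ⋯ − b_i·y_i in S_i. Then ann_{S_i}(s) is the principal ideal generated by t and ann_{S_i}(t) is the principal ideal generated by s; that is, s and t form an exact pair of zerodivisors in S_i. -/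
set_option synthInstance.maxHeartbeats 1000000
set_option maxHeartbeats 1000000

open MvPolynomial

noncomputable section

/-!
Write `Y = ∑ b_j y_j`, so `s = a x + Y` and `t = a x - Y`. As `x² = 0` and `y_j y_l = 0`, `S_i` has
`k`-basis `1, x, y_j, x y_j`, and `t s = a² x² - Y² = 0`. Multiplication by `s` sends
`r = c + d x + ∑ e_j y_j + ∑ f_j x y_j` to `c a x + ∑ c b_j y_j + ∑ (d b_j + a e_j) x y_j`, so
`r s = 0` forces `c = 0` and `e = -(d/a) b`; since `y_j t = a x y_j`, this gives
`r = (d/a) t + ∑ (f_j/a) y_j t ∈ (t)`. Replacing `b` by `-b` swaps `s` and `t`.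
Linear independence of the basis is detected by the `k`-algebra maps `S_i → k[ε'][ε]` sending
`x ↦ ε` and `y_j ↦ v_j ε'`.
-/

namespace Sring

open DualNumber TrivSqZeroExt

variable {k : Type} [Field k] {i : ℕ}

def ofCoeffs (c d : k) (e f : Fin i → k) : Sring k i :=
  algebraMap k _ c + d • xS k i + ∑ j, e j • yS k i j + ∑ j, f j • (xS k i * yS k i j)

def linearForm (a : k) (b : Fin i → k) : Sring k i :=
  a • xS k i + ∑ j, b j • yS k i j

theorem xS_mul_self : xS k i * xS k i = 0 := by
  rw [← map_mul, Ideal.Quotient.eq_zero_iff_mem]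
  exact Ideal.subset_span (Or.inl (sq _).symm)

theorem yS_mul_yS (j l : Fin i) : yS k i j * yS k i l = 0 := by
  rw [← map_mul, Ideal.Quotient.eq_zero_iff_mem]
  exact Ideal.subset_span (Or.inr ⟨j, l, rfl⟩)

theorem sum_smul_yS_mul_sum_smul_yS (b b' : Fin i → k) :
    (∑ j, b j • yS k i j) * ∑ j, b' j • yS k i j = 0 := by
  simp [Finset.sum_mul_sum, smul_mul_smul_comm, yS_mul_yS]

theorem exists_eq_ofCoeffs (r : Sring k i) : ∃ c d e f, r = ofCoeffs c d e f := by
  obtain ⟨p, rfl⟩ := Ideal.Quotient.mk_surjective r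
  induction p using MvPolynomial.induction_on with
  | C c => exact ⟨c, 0, 0, 0, by simp [ofCoeffs, ← Ideal.Quotient.mk_algebraMap]⟩
  | add p q hp hq =>
    obtain ⟨c, d, e, f, hp⟩ := hp
    obtain ⟨c', d', e', f', hq⟩ := hq
    refine ⟨c + c', d + d', e + e', f + f', ?_⟩
    simp only [ofCoeffs, map_add, hp, hq, add_smul, Pi.add_apply, Finset.sum_add_distrib]
    abel
  | mul_X p n hp =>
    obtain ⟨c, d, e, f, hp⟩ := hp
    rw [map_mul, hp]
    cases n using Fin.cases with
    | zero =>
      refine ⟨0, c, 0, e, ?_⟩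
      change _ * xS k i = _
      have hxx : ∀ r, xS k i * (xS k i * r) = 0 := by simp [← mul_assoc, xS_mul_self]
      simp [ofCoeffs, add_mul, Finset.sum_mul, smul_mul_assoc, mul_assoc, xS_mul_self, hxx,
        mul_comm (yS k i _), ← Algebra.smul_def]
    | succ j =>
      refine ⟨0, 0, Pi.single j c, Pi.single j d, ?_⟩
      change _ * yS k i j = _
      simp [ofCoeffs, add_mul, Finset.sum_mul, smul_mul_assoc, mul_assoc, yS_mul_yS,
        ← Algebra.smul_def]

theorem ofCoeffs_mul_linearForm (c d a : k) (e f b : Fin i → k) :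
    ofCoeffs c d e f * linearForm a b = ofCoeffs 0 (c * a) (c • b) (d • b + a • e) := by
  have hxyx : ∀ j, xS k i * yS k i j * xS k i = 0 := fun j => by
    rw [mul_right_comm, xS_mul_self, zero_mul]
  have hxyy : ∀ j l, xS k i * yS k i j * yS k i l = 0 := fun j l => by
    rw [mul_assoc, yS_mul_yS, mul_zero]
  simp only [ofCoeffs, linearForm, add_mul, mul_add, Finset.sum_mul, Finset.mul_sum,
    smul_mul_assoc, mul_smul_comm, xS_mul_self, yS_mul_yS, hxyx, hxyy,
    mul_comm (yS k i _) (xS k i), ← Algebra.smul_def, smul_zero, Finset.sum_const_zero, add_zero,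
    zero_add, map_zero, Finset.sum_add_distrib, add_smul, Pi.add_apply, Pi.smul_apply, smul_eq_mul]
  simp only [smul_add, Finset.smul_sum, smul_smul, Finset.sum_add_distrib, mul_comm a,
    mul_comm (b _)]
  abel

def toDualNumber (v : Fin i → k) : Sring k i →ₐ[k] k[ε][ε] :=
  Ideal.Quotient.liftₐ (SIdeal k i)
      (aeval (R := k) (Fin.cons (ε : k[ε][ε]) fun j => inl (v j • ε))) <| by
    intro p hp
    refine RingHom.mem_ker.mp (Ideal.span_le.mpr ?_ hp)
    rintro q (rfl | ⟨j, l, rfl⟩) <;> rw [SetLike.mem_coe, RingHom.mem_ker]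
    · rw [map_pow, aeval_X, Fin.cons_zero, eps_pow_two]
    · rw [map_mul, aeval_X, aeval_X, Fin.cons_succ, Fin.cons_succ, inl_mul_inl,
        smul_mul_smul_comm, eps_mul_eps, smul_zero, inl_zero]

@[simp] theorem toDualNumber_xS (v : Fin i → k) : toDualNumber v (xS k i) = ε :=
  aeval_X _ _

@[simp] theorem toDualNumber_yS (v : Fin i → k) (j : Fin i) :
    toDualNumber v (yS k i j) = inl (v j • ε) :=
  aeval_X _ _

theorem eq_zero_of_ofCoeffs_eq_zero {c d : k} {e f : Fin i → k} (h : ofCoeffs c d e f = 0) :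
    c = 0 ∧ d = 0 ∧ e = 0 ∧ f = 0 := by
  have coords : ∀ v : Fin i → k,
      c = 0 ∧ ∑ j, e j * v j = 0 ∧ d = 0 ∧ ∑ j, f j * v j = 0 := by
    intro v
    have hv := congrArg (toDualNumber v) h
    simp only [ofCoeffs, map_add, map_sum, map_smul, AlgHom.commutes, map_mul, toDualNumber_xS,
      toDualNumber_yS, map_zero, algebraMap_eq_inl'] at hv
    simpa [fst_sum, snd_sum] using
      congrArg (fun z => (z.fst.fst, z.fst.snd, z.snd.fst, z.snd.snd)) hv
  refine ⟨(coords 0).1, (coords 0).2.2.1, funext fun j => ?_, funext fun j => ?_⟩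
  · simpa [Pi.single_apply] using (coords (Pi.single j 1)).2.1
  · simpa [Pi.single_apply] using (coords (Pi.single j 1)).2.2.2

theorem linearForm_neg (a : k) (b : Fin i → k) :
    linearForm a (-b) = a • xS k i - ∑ j, b j • yS k i j := by
  simp [linearForm, neg_smul, sub_eq_add_neg]

theorem yS_mul_linearForm (a : k) (b : Fin i → k) (j : Fin i) :
    yS k i j * linearForm a b = a • (xS k i * yS k i j) := by
  simp [linearForm, mul_add, Finset.mul_sum, mul_smul_comm, yS_mul_yS,
    mul_comm (yS k i j) (xS k i)]

theorem linearForm_mul_linearForm_neg (a : k) (b : Fin i → k) :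
    linearForm a b * linearForm a (-b) = 0 := by
  rw [linearForm_neg, linearForm, ← mul_self_sub_mul_self, smul_mul_smul_comm, xS_mul_self,
    sum_smul_yS_mul_sum_smul_yS, smul_zero, sub_zero]

theorem mem_span_linearForm_neg_of_mul_eq_zero {a : k} (ha : a ≠ 0) {b : Fin i → k}
    {r : Sring k i} (hr : r * linearForm a b = 0) : r ∈ Ideal.span {linearForm a (-b)} := by
  obtain ⟨c, d, e, f, rfl⟩ := exists_eq_ofCoeffs r
  rw [ofCoeffs_mul_linearForm] at hr
  obtain ⟨-, hca, -, hdbe⟩ := eq_zero_of_ofCoeffs_eq_zero hr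
  obtain rfl : c = 0 := (mul_eq_zero.mp hca).resolve_right ha
  have he : e = -(d / a) • b := funext fun j => by
    have hj : d * b j + a * e j = 0 := congrFun hdbe j
    rw [Pi.smul_apply, smul_eq_mul]
    field_simp
    linear_combination hj
  rw [Ideal.mem_span_singleton']
  refine ⟨algebraMap k _ (d / a) + ∑ j, (f j / a) • yS k i j, ?_⟩
  rw [add_mul, Finset.sum_mul]
  simp only [smul_mul_assoc, yS_mul_linearForm]
  simp only [← Algebra.smul_def, linearForm, ofCoeffs, he, smul_add, Finset.smul_sum, smul_smul,
    div_mul_cancel₀ _ ha, map_zero, zero_add, Pi.smul_apply, Pi.neg_apply, neg_mul, mul_neg,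
    smul_eq_mul]

theorem ann_linearForm {a : k} (ha : a ≠ 0) (b : Fin i → k) :
    {r : Sring k i | r * linearForm a b = 0} = ↑(Ideal.span {linearForm a (-b)}) := by
  ext r
  refine ⟨mem_span_linearForm_neg_of_mul_eq_zero ha, fun hr => ?_⟩
  obtain ⟨u, rfl⟩ := Ideal.mem_span_singleton'.mp hr
  rw [Set.mem_ofPred_eq, mul_assoc, mul_comm (linearForm a (-b)), linearForm_mul_linearForm_neg,
    mul_zero]

end Sring

theorem stmt2_general (k : Type) [Field k] (i : ℕ)
    (a : k) (b : Fin i → k) (ha : a ≠ 0) (s t : Sring k i)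
    (hs : s = algebraMap k (Sring k i) a * xS k i +
      ∑ j, algebraMap k (Sring k i) (b j) * yS k i j)
    (ht : t = algebraMap k (Sring k i) a * xS k i -
      ∑ j, algebraMap k (Sring k i) (b j) * yS k i j) :
    {r : Sring k i | r * s = 0} = ↑(Ideal.span {t}) ∧
    {r : Sring k i | r * t = 0} = ↑(Ideal.span {s}) := by
  simp only [← Algebra.smul_def] at hs ht
  change s = Sring.linearForm a b at hs
  rw [← Sring.linearForm_neg] at ht
  subst hs ht
  exact ⟨Sring.ann_linearForm ha b, by simpa using Sring.ann_linearForm ha (-b)⟩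

/-- For `i ≥ 2`, `a, b₁, …, b_i ∈ k` with `a ≠ 0`, the elements
`s = a·x + Σ b_j·y_j` and `t = a·x − Σ b_j·y_j` of `S_i` form an exact pair of zerodivisors:
`ann(s) = (t)` and `ann(t) = (s)`. -/
theorem stmt2 (k : Type) [Field k] [CharZero k] (i : ℕ) (hi : 2 ≤ i)
    (a : k) (b : Fin i → k) (ha : a ≠ 0) (s t : Sring k i)
    (hs : s = algebraMap k (Sring k i) a * xS k i +
      ∑ j, algebraMap k (Sring k i) (b j) * yS k i j)
    (ht : t = algebraMap k (Sring k i) a * xS k i -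
      ∑ j, algebraMap k (Sring k i) (b j) * yS k i j) :
    {r : Sring k i | r * s = 0} = ↑(Ideal.span {t}) ∧
    {r : Sring k i | r * t = 0} = ↑(Ideal.span {s}) :=
  stmt2_general k i a b ha s t hs ht
end
end

section
/- Let i ≥ 2 and let b_1, …, b_i ∈ k, not all zero. Set s = b_1·y_1 + ⋯ + b_i·y_i in S_i. Then s is not an exact zerodivisor in S_i: there is no element t ∈ S_i such that ann(s) = tS_i and ann(t) = sS_i. (In particular, the ideal (y_1, …, y_i) of S_i is not principal.) -/
set_option synthInstance.maxHeartbeats 1000000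
set_option maxHeartbeats 1000000

open MvPolynomial

noncomputable section

open TrivSqZeroExt in
/-- The algebra map `S_i →ₐ[k] k[ε]` sending `x ↦ 0`, `y_j ↦ ε`, `y_{j'} ↦ 0` for `j' ≠ j`. -/
def Phi (k : Type) [Field k] (i : ℕ) (j : Fin i) : Sring k i →ₐ[k] DualNumber k :=
  Ideal.Quotient.liftₐ _
    (aeval (fun m => if m = j.succ then (DualNumber.eps : DualNumber k) else 0)) (by
      intro a ha
      have hle : SIdeal k i ≤ RingHom.ker
          (aeval (R := k) (fun m => if m = j.succ then (DualNumber.eps : DualNumber k)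
            else 0)).toRingHom := by
        rw [Ideal.span_le]
        rintro p (hp | ⟨a, c, rfl⟩)
        · rw [Set.mem_singleton_iff] at hp
          subst hp
          simp [RingHom.mem_ker, (Fin.succ_ne_zero j).symm]
        · simp only [SetLike.mem_coe, RingHom.mem_ker, AlgHom.toRingHom_eq_coe,
            RingHom.coe_coe, map_mul, aeval_X]
          split_ifs <;> simp [DualNumber.eps_mul_eps]
      exact hle ha)

lemma Phi_mk (k : Type) [Field k] (i : ℕ) (j : Fin i) (p : MvPolynomial (Fin (i + 1)) k) :
    Phi k i j (Ideal.Quotient.mk _ p) =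
      aeval (fun m => if m = j.succ then (DualNumber.eps : DualNumber k) else 0) p :=
  Ideal.Quotient.liftₐ_apply _ _ _ _

lemma Phi_y_self (k : Type) [Field k] (i : ℕ) (j : Fin i) :
    Phi k i j (yS k i j) = DualNumber.eps := by
  rw [yS, Phi_mk, aeval_X, if_pos rfl]

lemma Phi_y_ne (k : Type) [Field k] (i : ℕ) (j j' : Fin i) (h : j' ≠ j) :
    Phi k i j (yS k i j') = 0 := by
  rw [yS, Phi_mk, aeval_X, if_neg (fun hc => h (Fin.succ_injective i hc))]

lemma fst_Phi_eq (k : Type) [Field k] (i : ℕ) (j j' : Fin i) (z : Sring k i) :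
    (Phi k i j z).fst = (Phi k i j' z).fst := by
  obtain ⟨p, rfl⟩ := Ideal.Quotient.mk_surjective z
  rw [Phi_mk, Phi_mk]
  have h : ∀ (j : Fin i),
      (TrivSqZeroExt.fst (M := k))
        (aeval (fun m => if m = j.succ then (DualNumber.eps : DualNumber k) else 0) p)
      = aeval (fun _ : Fin (i + 1) => (0 : k)) p := by
    intro j
    rw [show (TrivSqZeroExt.fst
        (aeval (fun m => if m = j.succ then (DualNumber.eps : DualNumber k) else 0) p))
      = (TrivSqZeroExt.fstHom k k k)
        (aeval (fun m => if m = j.succ then (DualNumber.eps : DualNumber k) else 0) p) from rfl,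
      MvPolynomial.comp_aeval_apply]
    have hfun : (fun m : Fin (i + 1) =>
        (TrivSqZeroExt.fstHom k k k) (if m = j.succ then (DualNumber.eps : DualNumber k) else 0))
        = fun _ => (0 : k) := by
      funext m; split_ifs <;> simp
    rw [hfun]
  rw [h j, h j']

/-- For `i ≥ 2` and `b₁, …, b_i ∈ k` not all zero, `s = Σ b_j·y_j`
is not an exact zerodivisor in `S_i`: there is no `t` with `ann(s) = tS_i` and
`ann(t) = sS_i`. -/
theorem stmt4 (k : Type) [Field k] [CharZero k] (i : ℕ) (hi : 2 ≤ i)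
    (b : Fin i → k) (hb : b ≠ 0) (s : Sring k i)
    (hs : s = ∑ j, algebraMap k (Sring k i) (b j) * yS k i j) :
    ¬ ∃ t : Sring k i,
        {r : Sring k i | r * s = 0} = ↑(Ideal.span {t}) ∧
        {r : Sring k i | r * t = 0} = ↑(Ideal.span {s}) := by
  rintro ⟨t, h1, _⟩
  obtain ⟨j0, hb0⟩ : ∃ j, b j ≠ 0 := Function.ne_iff.mp hb
  have : Nontrivial (Fin i) := Fin.nontrivial_iff_two_le.mpr hi
  obtain ⟨j1, hj1⟩ : ∃ j1 : Fin i, j1 ≠ j0 := exists_ne j0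
  -- products of y's vanish
  have hyy : ∀ a c : Fin i, yS k i a * yS k i c = 0 := by
    intro a c
    rw [yS, yS, ← map_mul, Ideal.Quotient.eq_zero_iff_mem]
    exact Ideal.subset_span (Or.inr ⟨a, c, rfl⟩)
  have hys : ∀ j, yS k i j * s = 0 := by
    intro j
    rw [hs, Finset.mul_sum]
    refine Finset.sum_eq_zero fun m _ => ?_
    rw [mul_left_comm, hyy, mul_zero]
  have hts : t * s = 0 := by
    have ht : t ∈ {r : Sring k i | r * s = 0} := by
      rw [h1]; exact Ideal.mem_span_singleton_self t
    exact ht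
  have hmem : ∀ j, yS k i j ∈ Ideal.span {t} := by
    intro j
    have : yS k i j ∈ {r : Sring k i | r * s = 0} := hys j
    rwa [h1] at this
  obtain ⟨r, hr⟩ := Ideal.mem_span_singleton'.mp (hmem j1)
  obtain ⟨r', hr'⟩ := Ideal.mem_span_singleton'.mp (hmem j0)
  set α := Phi k i j0 with hα
  set β := Phi k i j1 with hβ
  -- α s = (algebraMap _ _ (b j0)) * ε
  have hαs : α s = algebraMap k (DualNumber k) (b j0) * DualNumber.eps := by
    rw [hs, map_sum]
    rw [Finset.sum_eq_single j0]
    · rw [map_mul, AlgHom.commutes, hα, Phi_y_self]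
    · intro m _ hm
      rw [map_mul, hα, Phi_y_ne k i j0 m hm, mul_zero]
    · intro h; exact absurd (Finset.mem_univ j0) h
  have hfs : (α s).fst = 0 := by
    rw [hαs]; simp [TrivSqZeroExt.algebraMap_eq_inl']
  have hss : (α s).snd = b j0 := by
    rw [hαs, DualNumber.snd_mul]
    simp [TrivSqZeroExt.algebraMap_eq_inl']
  -- from t * s = 0 : fst (α t) = 0
  have hαt : (α t).fst = 0 := by
    have h0 : (α t * α s).snd = 0 := by rw [← map_mul, hts, map_zero]; rfl
    rw [DualNumber.snd_mul, hss, hfs, mul_zero, add_zero] at h0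
    exact (mul_eq_zero.mp h0).resolve_right hb0
  have hβt : (β t).fst = 0 := by rw [hβ, ← fst_Phi_eq k i j0 j1 t]; exact hαt
  -- from r * t = y j1 :
  have hβrt : (β r * β t).snd = 1 := by
    rw [← map_mul, hr, hβ, Phi_y_self, DualNumber.snd_eps]
  rw [DualNumber.snd_mul, hβt, mul_zero, add_zero] at hβrt
  have hsnd_ne : (β t).snd ≠ 0 := fun h => by rw [h, mul_zero] at hβrt; exact one_ne_zero hβrt.symm
  -- from r' * t = y j0 , via β :
  have hβr't : (β r' * β t).snd = 0 := by
    rw [← map_mul, hr', hβ, Phi_y_ne k i j1 j0 (Ne.symm hj1), TrivSqZeroExt.snd_zero]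
  rw [DualNumber.snd_mul, hβt, mul_zero, add_zero] at hβr't
  have hr'fst : (β r').fst = 0 := (mul_eq_zero.mp hβr't).resolve_right hsnd_ne
  -- from r' * t = y j0 , via α :
  have hαr't : (α r' * α t).snd = 1 := by
    rw [← map_mul, hr', hα, Phi_y_self, DualNumber.snd_eps]
  rw [DualNumber.snd_mul, hαt, mul_zero, add_zero] at hαr't
  have : (α r').fst = 0 := by rw [hα, fst_Phi_eq k i j0 j1 r']; exact hr'fst
  rw [this, zero_mul] at hαr't
  exact zero_ne_one hαr't
end
end

section
/- Let i ≥ 2, n ≥ 1, and let B_1, …, B_i be n × n matrices with entries in k. Let ∂, σ : S_i^n → S_i^n be the S_i-linear maps given by the matrices x·I_n + Σ_{j=1}^i B_j·y_j and x·I_n − Σ_{j=1}^i B_j·y_j respectively. Then ker ∂ = range σ and ker σ = range ∂; that is, the periodic complex ⋯ → S_i^n →^σ S_i^n →^∂ S_i^n →^σ ⋯ is exact (it is a complete resolution of coker ∂). -/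
set_option synthInstance.maxHeartbeats 1000000
set_option maxHeartbeats 1000000

open MvPolynomial

noncomputable section

open TrivSqZeroExt

variable (k : Type) [Field k] (i : ℕ)

abbrev Rext := TrivSqZeroExt k (Fin i → k)
abbrev Aext := TrivSqZeroExt (Rext k i) (Rext k i)

def gA : Fin (i+1) → Aext k i :=
  Fin.cases (inr 1) (fun j => inl (inr (Pi.single j 1)))

def phi : MvPolynomial (Fin (i+1)) k →ₐ[k] Aext k i := aeval (gA k i)

lemma phi_X0 : phi k i (X 0) = inr 1 := by
  rw [phi, aeval_X, gA, Fin.cases_zero]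

lemma phi_Xsucc (j : Fin i) : phi k i (X j.succ) = inl (inr (Pi.single j 1)) := by
  rw [phi, aeval_X, gA, Fin.cases_succ]

lemma hker : ∀ p ∈ SIdeal k i, phi k i p = 0 := by
  intro p hp
  have h : SIdeal k i ≤ RingHom.ker (phi k i) := by
    rw [Ideal.span_le]
    rintro q (rfl | ⟨a, b, rfl⟩)
    · rw [SetLike.mem_coe, RingHom.mem_ker, map_pow, phi_X0]
      ext <;> simp [fst_mul, snd_mul, sq]
    · rw [SetLike.mem_coe, RingHom.mem_ker, map_mul, phi_Xsucc, phi_Xsucc]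
      ext <;> simp [fst_mul, snd_mul]
  exact RingHom.mem_ker.mp (h hp)

def phibar : Sring k i →ₐ[k] Aext k i :=
  Ideal.Quotient.liftₐ (SIdeal k i) (phi k i) (hker k i)

lemma phibar_mk (p : MvPolynomial (Fin (i+1)) k) :
    phibar k i (Ideal.Quotient.mk _ p) = phi k i p := rfl

lemma hx2 : xS k i * xS k i = 0 := by
  rw [← map_mul, Ideal.Quotient.eq_zero_iff_mem, ← sq]
  exact Ideal.subset_span (Or.inl rfl)

lemma hyy (a b : Fin i) : yS k i a * yS k i b = 0 := by
  rw [← map_mul, Ideal.Quotient.eq_zero_iff_mem]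
  exact Ideal.subset_span (Or.inr ⟨a, b, rfl⟩)

lemma phibar_x : phibar k i (xS k i) = inr 1 := phi_X0 k i

lemma phibar_y (j : Fin i) : phibar k i (yS k i j) = inl (inr (Pi.single j 1)) :=
  phi_Xsucc k i j

lemma sum_y_mul_y (c : Fin i → k) (j : Fin i) :
    (∑ l, c l • yS k i l) * yS k i j = 0 := by
  rw [Finset.sum_mul]
  refine Finset.sum_eq_zero fun l _ => ?_
  rw [smul_mul_assoc, hyy, smul_zero]

lemma sum_xy_mul_y (e : Fin i → k) (j : Fin i) :
    (∑ l, e l • (xS k i * yS k i l)) * yS k i j = 0 := by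
  rw [Finset.sum_mul]
  refine Finset.sum_eq_zero fun l _ => ?_
  rw [smul_mul_assoc, mul_assoc, hyy, mul_zero, smul_zero]

lemma sum_xy_mul_x (e : Fin i → k) :
    (∑ l, e l • (xS k i * yS k i l)) * xS k i = 0 := by
  rw [Finset.sum_mul]
  refine Finset.sum_eq_zero fun l _ => ?_
  rw [smul_mul_assoc, mul_comm (xS k i) (yS k i l), mul_assoc, hx2, mul_zero, smul_zero]

/-- Spanning: every element of `S` equals the expansion determined by `phibar`. -/
lemma span_expand (s : Sring k i) :
    algebraMap k _ ((phibar k i s).fst.fst) + (∑ j, (phibar k i s).fst.snd j • yS k i j)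
      + (phibar k i s).snd.fst • xS k i
      + (∑ j, (phibar k i s).snd.snd j • (xS k i * yS k i j)) = s := by
  obtain ⟨p, rfl⟩ := Ideal.Quotient.mk_surjective s
  induction p using MvPolynomial.induction_on with
  | C a =>
    rw [phibar_mk]
    simp only [phi, aeval_C, algebraMap_eq_inl', fst_inl, snd_inl]
    simp [IsScalarTower.algebraMap_apply k (MvPolynomial (Fin (i+1)) k) (Sring k i),
      MvPolynomial.algebraMap_eq]
  | add p q hp hq =>
    simp only [map_add, fst_add, snd_add, Pi.add_apply, add_smul, Finset.sum_add_distrib]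
    linear_combination hp + hq
  | mul_X p t hp =>
    have hmul : (Ideal.Quotient.mk (SIdeal k i)) (p * X t)
        = Ideal.Quotient.mk (SIdeal k i) p * Ideal.Quotient.mk (SIdeal k i) (X t) :=
      map_mul _ _ _
    induction t using Fin.cases with
    | zero =>
      rw [hmul]
      conv_rhs => rw [← hp]
      rw [show Ideal.Quotient.mk (SIdeal k i) (X (0 : Fin (i+1))) = xS k i from rfl]
      rw [map_mul, phibar_x]
      simp only [fst_mul, snd_mul, fst_inr, snd_inr, mul_zero, smul_eq_mul, mul_one,
        MulOpposite.op_zero, zero_smul, add_zero, fst_zero, snd_zero, Pi.zero_apply]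
      simp only [map_zero, zero_smul, Finset.sum_const_zero, zero_add, add_zero, zero_mul]
      rw [add_mul, add_mul, add_mul, smul_mul_assoc, hx2, smul_zero, sum_xy_mul_x]
      have hc : (∑ j, (phibar k i ((Ideal.Quotient.mk (SIdeal k i)) p)).fst.snd j • yS k i j)
          * xS k i = ∑ j, (phibar k i ((Ideal.Quotient.mk (SIdeal k i)) p)).fst.snd j
            • (xS k i * yS k i j) := by
        rw [Finset.sum_mul]
        exact Finset.sum_congr rfl fun j _ => by rw [smul_mul_assoc, mul_comm]
      rw [hc, ← Algebra.smul_def]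
      ring
    | succ j =>
      rw [hmul]
      conv_rhs => rw [← hp]
      rw [show Ideal.Quotient.mk (SIdeal k i) (X (j.succ)) = yS k i j from rfl]
      rw [map_mul, phibar_y]
      simp only [fst_mul, snd_mul, fst_inl, snd_inl, smul_zero, zero_add,
        MulOpposite.smul_eq_mul_unop, MulOpposite.unop_op, fst_inr, snd_inr, mul_zero,
        MulOpposite.op_zero, zero_smul, add_zero]
      rw [add_mul, add_mul, add_mul, sum_y_mul_y, sum_xy_mul_y, smul_mul_assoc]
      simp only [map_zero, zero_add, add_zero, zero_smul, Pi.smul_apply, Pi.single_apply,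
        smul_eq_mul, mul_ite, mul_one, mul_zero, ite_smul, zero_smul, Finset.sum_ite_eq',
        Finset.mem_univ, if_true, Algebra.smul_def]
      rw [← Algebra.smul_def]

lemma single_sum (c : Fin i → k) : ∑ j, c j • (Pi.single j 1 : Fin i → k) = c := by
  funext l
  simp [Finset.sum_apply, Pi.single_apply, Finset.sum_ite_eq']

/-- Independence of 1, y_j, x, x*y_j over k in S. -/
lemma indep (a b : k) (c e : Fin i → k)
    (h : algebraMap k (Sring k i) a + (∑ j, c j • yS k i j) + b • xS k i
      + (∑ j, e j • (xS k i * yS k i j)) = 0) :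
    a = 0 ∧ b = 0 ∧ c = 0 ∧ e = 0 := by
  have h2 := congrArg (phibar k i) h
  rw [map_zero] at h2
  simp only [map_add, map_smul, map_sum, map_mul, phibar_x, phibar_y,
    AlgHom.commutes] at h2
  have hff := congrArg (fun u : Aext k i => fst (fst u)) h2
  have hfs := congrArg (fun u : Aext k i => snd (fst u)) h2
  have hsf := congrArg (fun u : Aext k i => fst (snd u)) h2
  have hss := congrArg (fun u : Aext k i => snd (snd u)) h2
  simp only [fst_add, snd_add, fst_smul, snd_smul, fst_sum, snd_sum, fst_mul, snd_mul,
    fst_inl, snd_inl, fst_inr, snd_inr, algebraMap_eq_inl', fst_zero, snd_zero,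
    mul_zero, zero_mul, smul_zero, zero_add, add_zero, zero_smul,
    MulOpposite.smul_eq_mul_unop, MulOpposite.unop_op, MulOpposite.op_zero,
    one_mul, mul_one, smul_eq_mul, Finset.sum_const_zero,
    Pi.zero_apply, Finset.sum_apply, Pi.smul_apply] at hff hfs hsf hss
  rw [single_sum] at hfs
  rw [snd_one, smul_zero, zero_add, single_sum] at hss
  rw [fst_one, mul_one] at hsf
  exact ⟨by simpa using hff, hsf, hfs, hss⟩

lemma x_mul (s : Sring k i) :
    xS k i * s = (phibar k i s).fst.fst • xS k i
      + ∑ j, (phibar k i s).fst.snd j • (xS k i * yS k i j) := by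
  conv_lhs => rw [← span_expand k i s]
  rw [mul_add, mul_add, mul_add]
  rw [mul_comm (xS k i) (algebraMap k (Sring k i) _), ← Algebra.smul_def]
  rw [mul_smul_comm, hx2, smul_zero]
  have h1 : xS k i * (∑ j, (phibar k i s).fst.snd j • yS k i j)
      = ∑ j, (phibar k i s).fst.snd j • (xS k i * yS k i j) := by
    rw [Finset.mul_sum]; exact Finset.sum_congr rfl fun j _ => (mul_smul_comm _ _ _)
  have h2 : xS k i * (∑ j, (phibar k i s).snd.snd j • (xS k i * yS k i j)) = 0 := by
    rw [Finset.mul_sum]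
    refine Finset.sum_eq_zero fun j _ => ?_
    rw [mul_smul_comm, ← mul_assoc, hx2, zero_mul, smul_zero]
  rw [h1, h2]
  ring

lemma y_mul (j : Fin i) (s : Sring k i) :
    yS k i j * s = (phibar k i s).fst.fst • yS k i j
      + (phibar k i s).snd.fst • (xS k i * yS k i j) := by
  conv_lhs => rw [← span_expand k i s]
  rw [mul_add, mul_add, mul_add]
  rw [mul_comm (yS k i j) (algebraMap k (Sring k i) _), ← Algebra.smul_def]
  have h1 : yS k i j * (∑ l, (phibar k i s).fst.snd l • yS k i l) = 0 := by
    rw [Finset.mul_sum]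
    refine Finset.sum_eq_zero fun l _ => ?_
    rw [mul_smul_comm, hyy, smul_zero]
  have h2 : yS k i j * ((phibar k i s).snd.fst • xS k i)
      = (phibar k i s).snd.fst • (xS k i * yS k i j) := by
    rw [mul_smul_comm, mul_comm]
  have h3 : yS k i j * (∑ l, (phibar k i s).snd.snd l • (xS k i * yS k i l)) = 0 := by
    rw [Finset.mul_sum]
    refine Finset.sum_eq_zero fun l _ => ?_
    rw [mul_smul_comm, mul_comm (xS k i) (yS k i l), ← mul_assoc, hyy, zero_mul, smul_zero]
  rw [h1, h2, h3]
  ring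

lemma mul_alg (t : k) (s u : Sring k i) :
    u * (algebraMap k (Sring k i) t * s) = t • (u * s) := by
  rw [Algebra.smul_def t (u * s)]; ring

variable {n : ℕ}

def MB (B : Fin i → Matrix (Fin n) (Fin n) k) : Matrix (Fin n) (Fin n) (Sring k i) :=
  xS k i • (1 : Matrix (Fin n) (Fin n) (Sring k i))
    + ∑ j, yS k i j • (B j).map (algebraMap k (Sring k i))

lemma MB_neg (B : Fin i → Matrix (Fin n) (Fin n) k) :
    MB k i (fun j => -B j) = xS k i • (1 : Matrix (Fin n) (Fin n) (Sring k i))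
      - ∑ j, yS k i j • (B j).map (algebraMap k (Sring k i)) := by
  ext r s
  simp [MB, Matrix.sub_apply, Matrix.add_apply, Matrix.sum_apply, Matrix.smul_apply,
    Matrix.map_apply, smul_eq_mul, map_neg, mul_neg, Finset.sum_neg_distrib, sub_eq_add_neg]
  rw [← Finset.sum_neg_distrib]
  exact Finset.sum_congr rfl fun l _ => by ring

lemma MB_entry (B : Fin i → Matrix (Fin n) (Fin n) k) (r s : Fin n) :
    MB k i B r s = (if r = s then xS k i else 0)
      + ∑ j, yS k i j * algebraMap k (Sring k i) (B j r s) := by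
  simp [MB, Matrix.add_apply, Matrix.smul_apply, Matrix.sum_apply, Matrix.one_apply,
    Matrix.map_apply, smul_eq_mul, mul_ite, mul_one, mul_zero]

lemma MB_mul_MB_neg (B : Fin i → Matrix (Fin n) (Fin n) k) :
    MB k i B * MB k i (fun j => -B j) = 0 := by
  ext r t
  rw [Matrix.mul_apply, Matrix.zero_apply]
  have hent : ∀ s : Fin n, MB k i B r s * MB k i (fun j => -B j) s t
      = ((if r = s then xS k i else 0) + ∑ j, yS k i j * algebraMap k (Sring k i) (B j r s))
        * ((if s = t then xS k i else 0)
          + ∑ l, yS k i l * algebraMap k (Sring k i) ((fun j => -B j) l s t)) := fun s => by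
    rw [MB_entry, MB_entry]
  rw [Finset.sum_congr rfl fun s _ => hent s]
  simp only [add_mul, mul_add, Finset.sum_add_distrib]
  have h1 : ∑ s, (if r = s then xS k i else 0) * (if s = t then xS k i else 0) = 0 := by
    refine Finset.sum_eq_zero fun s _ => ?_
    split_ifs <;> simp [hx2 k i]
  have h2 : ∑ s, (if r = s then xS k i else 0)
      * (∑ l, yS k i l * algebraMap k (Sring k i) ((fun j => -B j) l s t))
      + ∑ s, (∑ j, yS k i j * algebraMap k (Sring k i) (B j r s))
        * (if s = t then xS k i else 0) = 0 := by
    have c1 : ∑ s, (if r = s then xS k i else 0)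
        * (∑ l, yS k i l * algebraMap k (Sring k i) ((fun j => -B j) l s t))
        = xS k i * (∑ l, yS k i l * algebraMap k (Sring k i) ((fun j => -B j) l r t)) := by
      simp only [ite_mul, zero_mul]
      rw [Finset.sum_ite_eq]
      simp
    have c2 : ∑ s, (∑ j, yS k i j * algebraMap k (Sring k i) (B j r s))
        * (if s = t then xS k i else 0)
        = (∑ j, yS k i j * algebraMap k (Sring k i) (B j r t)) * xS k i := by
      simp only [mul_ite, mul_zero]
      rw [Finset.sum_ite_eq']
      simp
    rw [c1, c2, Finset.mul_sum, Finset.sum_mul, ← Finset.sum_add_distrib]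
    refine Finset.sum_eq_zero fun j _ => ?_
    simp only [Matrix.neg_apply, map_neg]
    ring
  have h3 : ∑ s, (∑ j, yS k i j * algebraMap k (Sring k i) (B j r s))
      * (∑ l, yS k i l * algebraMap k (Sring k i) ((fun j => -B j) l s t)) = 0 := by
    refine Finset.sum_eq_zero fun s _ => ?_
    rw [Finset.sum_mul_sum]
    refine Finset.sum_eq_zero fun j _ => Finset.sum_eq_zero fun l _ => ?_
    rw [mul_mul_mul_comm, hyy, zero_mul]
  linear_combination h1 + h2 + h3

lemma MB_mulVec (B : Fin i → Matrix (Fin n) (Fin n) k) (v : Fin n → Sring k i) (r : Fin n) :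
    (MB k i B).mulVecLin v r = xS k i * v r
      + ∑ j, yS k i j * (∑ s, algebraMap k (Sring k i) (B j r s) * v s) := by
  rw [Matrix.mulVecLin_apply]
  show ∑ s, MB k i B r s * v s = _
  rw [Finset.sum_congr rfl fun s _ => by rw [MB_entry k i B r s]]
  simp only [add_mul, Finset.sum_add_distrib, ite_mul, zero_mul, Finset.sum_mul]
  congr 1
  · rw [Finset.sum_ite_eq]
    simp
  · rw [Finset.sum_comm]
    refine Finset.sum_congr rfl fun j _ => ?_
    rw [Finset.mul_sum]
    exact Finset.sum_congr rfl fun s _ => mul_assoc _ _ _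

lemma extract (B : Fin i → Matrix (Fin n) (Fin n) k) (v : Fin n → Sring k i)
    (hv : (MB k i B).mulVecLin v = 0) (r : Fin n) :
    (phibar k i (v r)).fst.fst = 0 ∧
    ∀ j, (phibar k i (v r)).fst.snd j + ∑ s, B j r s * (phibar k i (v s)).snd.fst = 0 := by
  have h0 : (MB k i B).mulVecLin v r = 0 := by rw [hv]; rfl
  rw [MB_mulVec, x_mul] at h0
  have hy : ∀ j : Fin i, yS k i j * (∑ s, algebraMap k (Sring k i) (B j r s) * v s)
      = (∑ s, B j r s * (phibar k i (v s)).fst.fst) • yS k i j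
        + (∑ s, B j r s * (phibar k i (v s)).snd.fst) • (xS k i * yS k i j) := by
    intro j
    rw [Finset.mul_sum]
    have h1 : ∀ s : Fin n, yS k i j * (algebraMap k (Sring k i) (B j r s) * v s)
        = (B j r s * (phibar k i (v s)).fst.fst) • yS k i j
          + (B j r s * (phibar k i (v s)).snd.fst) • (xS k i * yS k i j) := fun s => by
      rw [mul_alg, y_mul, smul_add, smul_smul, smul_smul]
    rw [Finset.sum_congr rfl fun s _ => h1 s, Finset.sum_add_distrib,
      ← Finset.sum_smul, ← Finset.sum_smul]
  rw [Finset.sum_congr rfl fun j _ => hy j, Finset.sum_add_distrib] at h0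
  have hexp : algebraMap k (Sring k i) 0
      + (∑ j, (∑ s, B j r s * (phibar k i (v s)).fst.fst) • yS k i j)
      + (phibar k i (v r)).fst.fst • xS k i
      + (∑ j, ((phibar k i (v r)).fst.snd j + ∑ s, B j r s * (phibar k i (v s)).snd.fst)
          • (xS k i * yS k i j)) = 0 := by
    rw [map_zero, zero_add]
    simp only [add_smul, Finset.sum_add_distrib]
    linear_combination (norm := abel) h0
  obtain ⟨_, hb, _, he⟩ := indep k i 0 ((phibar k i (v r)).fst.fst)
    (fun j => ∑ s, B j r s * (phibar k i (v s)).fst.fst)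
    (fun j => (phibar k i (v r)).fst.snd j + ∑ s, B j r s * (phibar k i (v s)).snd.fst) hexp
  exact ⟨hb, fun j => congrFun he j⟩

lemma key (B C : Fin i → Matrix (Fin n) (Fin n) k) (hC : C = fun j => -B j) :
    LinearMap.ker ((MB k i B).mulVecLin)
      = LinearMap.range ((MB k i C).mulVecLin) := by
  subst hC
  apply le_antisymm
  · intro v hv
    rw [LinearMap.mem_ker] at hv
    refine ⟨fun s => algebraMap k (Sring k i) ((phibar k i (v s)).snd.fst)
      + ∑ l, (phibar k i (v s)).snd.snd l • yS k i l, ?_⟩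
    funext r
    rw [MB_mulVec]
    have hxw : xS k i * (algebraMap k (Sring k i) ((phibar k i (v r)).snd.fst)
        + ∑ l, (phibar k i (v r)).snd.snd l • yS k i l)
        = (phibar k i (v r)).snd.fst • xS k i
          + ∑ l, (phibar k i (v r)).snd.snd l • (xS k i * yS k i l) := by
      rw [mul_add, mul_comm (xS k i) (algebraMap k (Sring k i) _), ← Algebra.smul_def,
        Finset.mul_sum]
      congr 1
      exact Finset.sum_congr rfl fun l _ => (mul_smul_comm _ _ _)
    have hyw : ∀ (jj : Fin i) (s : Fin n),
        yS k i jj * (algebraMap k (Sring k i) ((phibar k i (v s)).snd.fst)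
          + ∑ l, (phibar k i (v s)).snd.snd l • yS k i l)
        = (phibar k i (v s)).snd.fst • yS k i jj := by
      intro jj s
      rw [mul_add, mul_comm (yS k i jj) (algebraMap k (Sring k i) _), ← Algebra.smul_def,
        Finset.mul_sum]
      have h0 : ∑ l, yS k i jj * ((phibar k i (v s)).snd.snd l • yS k i l) = 0 :=
        Finset.sum_eq_zero fun l _ => by rw [mul_smul_comm, hyy, smul_zero]
      rw [h0, add_zero]
    have hj : ∀ j : Fin i,
        yS k i j * (∑ s, algebraMap k (Sring k i) ((fun j => -B j) j r s)
          * (algebraMap k (Sring k i) ((phibar k i (v s)).snd.fst)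
            + ∑ l, (phibar k i (v s)).snd.snd l • yS k i l))
        = (phibar k i (v r)).fst.snd j • yS k i j := by
      intro j
      rw [Finset.mul_sum]
      have h1 : ∀ s : Fin n, yS k i j * (algebraMap k (Sring k i) ((fun j => -B j) j r s)
          * (algebraMap k (Sring k i) ((phibar k i (v s)).snd.fst)
            + ∑ l, (phibar k i (v s)).snd.snd l • yS k i l))
          = ((-B j) r s * (phibar k i (v s)).snd.fst) • yS k i j := fun s => by
        rw [mul_alg, hyw, smul_smul]
      rw [Finset.sum_congr rfl fun s _ => h1 s, ← Finset.sum_smul]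
      congr 1
      have h2 : ∑ s, (-B j) r s * (phibar k i (v s)).snd.fst
          = -∑ s, B j r s * (phibar k i (v s)).snd.fst := by
        rw [← Finset.sum_neg_distrib]
        exact Finset.sum_congr rfl fun s _ => by rw [Matrix.neg_apply, neg_mul]
      rw [h2]
      have h3 := (extract k i B v hv r).2 j
      linear_combination -h3
    rw [hxw, Finset.sum_congr rfl fun j _ => hj j]
    conv_rhs => rw [← span_expand k i (v r)]
    rw [(extract k i B v hv r).1, map_zero, zero_add]
    abel
  · rintro v ⟨w, rfl⟩
    rw [LinearMap.mem_ker, ← LinearMap.comp_apply, ← Matrix.mulVecLin_mul, MB_mul_MB_neg,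
      Matrix.mulVecLin_zero, LinearMap.zero_apply]


/-- The `S_i`-linear maps `∂, σ : S_iⁿ → S_iⁿ` given by the matrices
`x·I + Σ B_j·y_j` and `x·I − Σ B_j·y_j` satisfy `ker ∂ = range σ` and `ker σ = range ∂`,
i.e. the periodic complex `⋯ →^σ S_iⁿ →^∂ S_iⁿ →^σ ⋯` is exact (a complete resolution
of `coker ∂`). -/
theorem stmt9 (k : Type) [Field k] [CharZero k] (i n : ℕ) (hi : 2 ≤ i) (hn : 1 ≤ n)
    (B : Fin i → Matrix (Fin n) (Fin n) k)
    (d σ : (Fin n → Sring k i) →ₗ[Sring k i] (Fin n → Sring k i))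
    (hd : d = Matrix.mulVecLin (xS k i • (1 : Matrix (Fin n) (Fin n) (Sring k i)) +
      ∑ j, yS k i j • (B j).map (algebraMap k (Sring k i))))
    (hσ : σ = Matrix.mulVecLin (xS k i • (1 : Matrix (Fin n) (Fin n) (Sring k i)) -
      ∑ j, yS k i j • (B j).map (algebraMap k (Sring k i)))) :
    LinearMap.ker d = LinearMap.range σ ∧ LinearMap.ker σ = LinearMap.range d := by
  have hdm : (xS k i • (1 : Matrix (Fin n) (Fin n) (Sring k i)) +
      ∑ j, yS k i j • (B j).map (algebraMap k (Sring k i))) = MB k i B := rfl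
  have hsm : (xS k i • (1 : Matrix (Fin n) (Fin n) (Sring k i)) -
      ∑ j, yS k i j • (B j).map (algebraMap k (Sring k i))) = MB k i (fun j => -B j) :=
    (MB_neg k i B).symm
  rw [hd, hσ, hdm, hsm]
  constructor
  · exact key k i B _ rfl
  · exact key k i (fun j => -B j) B (by funext j; simp)
end
end

section
/- Let i ≥ 2, n ≥ 1, and let B_1, …, B_i be n × n matrices with entries in k. Let ∂, σ : S_i^n → S_i^n be the S_i-linear maps given by the matrices x·I_n + Σ_{j=1}^i B_j·y_j and x·I_n − Σ_{j=1}^i B_j·y_j respectively. Then the image of ∂ (i.e., the first syzygy module of coker ∂) is isomorphic as an S_i-module to coker σ = S_i^n / range σ; consequently a minimal complete resolution of coker ∂ is periodic of period at most 2. -/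
/-!
Write `v ∈ S_iⁿ` in the `k`-basis `1, x, y_j, x y_j` of `S_i` as
`v = a + x b + ∑ y_j c_j + ∑ x y_j e_j` with `a, b, c_j, e_j ∈ kⁿ`. Because `x² = 0`,
`y_j y_l = 0` and the `B_j` have scalar entries,
`∂ v = x a + ∑ y_j B_j a + ∑ x y_j (B_j b + c_j)`, and `σ` is `∂` for `-B`. Applying this
formula twice gives `∂ σ = 0`; conversely `∂ v = 0` forces `a = 0` and `c_j = -B_j b`, so
`v = σ (b + ∑ y_j e_j)`. Hence `ker ∂ = range σ`, and
`range ∂ ≅ S_iⁿ / ker ∂ = coker σ`.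
The linear independence of the basis is read off in the model `k[ε] ⋉ k[ε]^i`, where `x ↦ ε`
and `y_j` goes to the `j`-th unit vector.
-/

set_option synthInstance.maxHeartbeats 1000000
set_option maxHeartbeats 1000000

open MvPolynomial

noncomputable section

open Matrix

namespace SquareZeroSyzygy

section General

variable {k R ι : Type*} [CommRing k] [CommRing R] [Algebra k R] [Fintype ι]

section Element

variable (k) (x : R) (y : ι → R)

def coordElem (a b : k) (c e : ι → k) : R :=
  a • 1 + b • x + ∑ j, c j • y j + ∑ j, e j • (x * y j)

structure HasSquareZeroBasis : Prop where
  mul_self_x : x * x = 0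
  mul_y : ∀ j l, y j * y l = 0
  exists_coordElem_eq : ∀ s, ∃ a b c e, coordElem k x y a b c e = s
  eq_zero_of_coordElem_eq_zero :
    ∀ a b c e, coordElem k x y a b c e = 0 → a = 0 ∧ b = 0 ∧ c = 0 ∧ e = 0

variable {k x y}

lemma coordElem_add (a b a' b' : k) (c e c' e' : ι → k) :
    coordElem k x y (a + a') (b + b') (c + c') (e + e') =
      coordElem k x y a b c e + coordElem k x y a' b' c' e' := by
  simp only [coordElem, add_smul, Pi.add_apply, Finset.sum_add_distrib]
  abel

lemma coordElem_mul_x (hx : x * x = 0) (a b : k) (c e : ι → k) :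
    coordElem k x y a b c e * x = coordElem k x y 0 a 0 c := by
  have hxyx : ∀ j, x * y j * x = 0 := fun j => by rw [mul_right_comm, hx, zero_mul]
  simp only [coordElem, add_mul, Finset.sum_mul, smul_mul_assoc, one_mul, hx, hxyx, smul_zero,
    Finset.sum_const_zero, zero_smul, Pi.zero_apply, add_zero, zero_add, mul_comm (y _) x]

lemma coordElem_mul_y [DecidableEq ι] (hy : ∀ j l, y j * y l = 0) (a b : k) (c e : ι → k)
    (l : ι) :
    coordElem k x y a b c e * y l = coordElem k x y 0 0 (Pi.single l a) (Pi.single l b) := by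
  simp [coordElem, add_mul, Finset.sum_mul, mul_assoc, hy, Pi.single_apply]

end Element

section Vector

variable {m : Type*}

variable (k) (x : R) (y : ι → R)

def coordVec (a b : m → k) (c e : ι → m → k) : m → R :=
  algebraMap k R ∘ a + x • (algebraMap k R ∘ b) + ∑ j, y j • (algebraMap k R ∘ c j) +
    ∑ j, (x * y j) • (algebraMap k R ∘ e j)

def xyMatrix [DecidableEq m] (B : ι → Matrix m m k) : Matrix m m R :=
  x • 1 + ∑ j, y j • (B j).map (algebraMap k R)

variable {k x y}

lemma coordVec_apply (a b : m → k) (c e : ι → m → k) (r : m) :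
    coordVec k x y a b c e r = coordElem k x y (a r) (b r) (fun j => c j r) (fun j => e j r) := by
  simp [coordVec, coordElem, Finset.sum_apply, Algebra.smul_def, mul_comm]

lemma HasSquareZeroBasis.exists_coordVec_eq (h : HasSquareZeroBasis k x y) (v : m → R) :
    ∃ a b c e, coordVec k x y a b c e = v := by
  choose a b c e hv using fun r => h.exists_coordElem_eq (v r)
  exact ⟨a, b, fun j r => c r j, fun j r => e r j, funext fun r => by rw [coordVec_apply, hv]⟩

lemma HasSquareZeroBasis.eq_zero_of_coordVec_eq_zero (h : HasSquareZeroBasis k x y)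
    {a b : m → k} {c e : ι → m → k} (hv : coordVec k x y a b c e = 0) :
    a = 0 ∧ b = 0 ∧ c = 0 ∧ e = 0 := by
  have hr r := h.eq_zero_of_coordElem_eq_zero _ _ _ _
    ((coordVec_apply a b c e r).symm.trans (congrFun hv r))
  refine ⟨funext fun r => (hr r).1, funext fun r => (hr r).2.1, ?_, ?_⟩
  · exact funext fun j => funext fun r => congrFun (hr r).2.2.1 j
  · exact funext fun j => funext fun r => congrFun (hr r).2.2.2 j

lemma xyMatrix_neg [DecidableEq m] (B : ι → Matrix m m k) :
    xyMatrix k x y (-B) = x • 1 - ∑ j, y j • (B j).map (algebraMap k R) := by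
  simp [xyMatrix, Matrix.map_neg, sub_eq_add_neg]

lemma algebraMap_comp_zero : algebraMap k R ∘ (0 : m → k) = 0 :=
  map_zero ((algebraMap k R).compLeft m)

lemma algebraMap_comp_add (u v : m → k) :
    algebraMap k R ∘ (u + v) = algebraMap k R ∘ u + algebraMap k R ∘ v :=
  map_add ((algebraMap k R).compLeft m) u v

lemma map_mulVec_algebraMap_comp [Fintype m] (B : Matrix m m k) (u : m → k) :
    B.map (algebraMap k R) *ᵥ (algebraMap k R ∘ u) = algebraMap k R ∘ (B *ᵥ u) :=
  funext fun r => (RingHom.map_mulVec _ B u r).symm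

lemma xyMatrix_mulVec_coordVec [Fintype m] [DecidableEq m] (hx : x * x = 0)
    (hy : ∀ j l, y j * y l = 0) (B : ι → Matrix m m k) (a b : m → k) (c e : ι → m → k) :
    xyMatrix k x y B *ᵥ coordVec k x y a b c e =
      coordVec k x y 0 a (fun j => B j *ᵥ a) (fun j => B j *ᵥ b + c j) := by
  simp only [xyMatrix, coordVec, add_mulVec, smul_mulVec, one_mulVec, sum_mulVec, mulVec_add,
    mulVec_smul, mulVec_sum, map_mulVec_algebraMap_comp, smul_add, Finset.smul_sum, smul_smul]
  have hxyx : ∀ j, x * y j * x = 0 := fun j => by rw [mul_right_comm, hx, zero_mul]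
  simp only [hx, hxyx, mul_assoc, hy, mul_zero, zero_smul, Finset.sum_const_zero, add_zero,
    mul_comm (y _) x, algebraMap_comp_add, algebraMap_comp_zero, smul_add, Finset.sum_add_distrib]
  abel

theorem HasSquareZeroBasis.ker_eq_range [Fintype m] [DecidableEq m]
    (h : HasSquareZeroBasis k x y) (B : ι → Matrix m m k) :
    LinearMap.ker (xyMatrix k x y B).mulVecLin =
      LinearMap.range (x • 1 - ∑ j, y j • (B j).map (algebraMap k R)).mulVecLin := by
  rw [← xyMatrix_neg]
  ext v
  constructor
  · intro hv
    obtain ⟨a, b, c, e, rfl⟩ := h.exists_coordVec_eq v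
    rw [LinearMap.mem_ker, mulVecLin_apply, xyMatrix_mulVec_coordVec h.mul_self_x h.mul_y] at hv
    obtain ⟨-, rfl, -, hc⟩ := h.eq_zero_of_coordVec_eq_zero hv
    have hc' : c = fun j => -B j *ᵥ b :=
      funext fun j => by rw [neg_mulVec, eq_neg_iff_add_eq_zero, add_comm]; exact congrFun hc j
    refine ⟨coordVec k x y b 0 e 0, ?_⟩
    rw [mulVecLin_apply, xyMatrix_mulVec_coordVec h.mul_self_x h.mul_y, hc']
    simp
  · rintro ⟨w, rfl⟩
    obtain ⟨a, b, c, e, rfl⟩ := h.exists_coordVec_eq w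
    rw [LinearMap.mem_ker, mulVecLin_apply, mulVecLin_apply,
      xyMatrix_mulVec_coordVec h.mul_self_x h.mul_y, xyMatrix_mulVec_coordVec h.mul_self_x h.mul_y]
    simp [coordVec, neg_mulVec]

end Vector

end General

section Sring

variable (k : Type) [Field k] (i : ℕ)

lemma xS_mul_xS : xS k i * xS k i = 0 := by
  rw [← map_mul, ← sq, Ideal.Quotient.eq_zero_iff_mem]
  exact Ideal.subset_span (Or.inl rfl)

lemma yS_mul_yS (j l : Fin i) : yS k i j * yS k i l = 0 := by
  rw [← map_mul, Ideal.Quotient.eq_zero_iff_mem]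
  exact Ideal.subset_span (Or.inr ⟨j, l, rfl⟩)

lemma exists_coordElem_eq_Sring (s : Sring k i) :
    ∃ a b c e, coordElem k (xS k i) (yS k i) a b c e = s := by
  obtain ⟨P, rfl⟩ := Ideal.Quotient.mk_surjective s
  induction P using MvPolynomial.induction_on with
  | C r => exact ⟨r, 0, 0, 0, by simp [coordElem, Algebra.smul_def]; rfl⟩
  | add P Q hP hQ =>
    obtain ⟨a, b, c, e, hP⟩ := hP
    obtain ⟨a', b', c', e', hQ⟩ := hQ
    exact ⟨a + a', b + b', c + c', e + e', by rw [coordElem_add, hP, hQ, map_add]⟩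
  | mul_X P l hP =>
    obtain ⟨a, b, c, e, hP⟩ := hP
    rw [map_mul, ← hP]
    induction l using Fin.cases with
    | zero => exact ⟨_, _, _, _, (coordElem_mul_x (xS_mul_xS k i) a b c e).symm⟩
    | succ l => exact ⟨_, _, _, _, (coordElem_mul_y (yS_mul_yS k i) a b c e l).symm⟩

abbrev Model := TrivSqZeroExt (DualNumber k) (Fin i → DualNumber k)

def modelGen : Fin (i + 1) → Model k i :=
  Fin.cases (TrivSqZeroExt.inl DualNumber.eps) fun j => TrivSqZeroExt.inr (Pi.single j 1)

def toModel : Sring k i →ₐ[k] Model k i :=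
  Ideal.Quotient.liftₐ _ (aeval (modelGen k i)) fun p hp =>
    RingHom.mem_ker.1 <| (Ideal.span_le (I := RingHom.ker _)).2 (by
      rintro q (rfl | ⟨a, b, rfl⟩) <;>
        simp [modelGen, sq, TrivSqZeroExt.inl_mul_inl, TrivSqZeroExt.inr_mul_inr]) hp

lemma toModel_xS : toModel k i (xS k i) = TrivSqZeroExt.inl DualNumber.eps :=
  aeval_X (modelGen k i) 0

lemma toModel_yS (j : Fin i) : toModel k i (yS k i j) = TrivSqZeroExt.inr (Pi.single j 1) :=
  aeval_X (modelGen k i) j.succ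

lemma toModel_coordElem (a b : k) (c e : Fin i → k) :
    toModel k i (coordElem k (xS k i) (yS k i) a b c e) = ((a, b), fun j => (c j, e j)) := by
  simp only [coordElem, map_add, map_sum, map_smul, map_mul, map_one, toModel_xS, toModel_yS]
  ext <;> simp [TrivSqZeroExt.inl_mul_inr, TrivSqZeroExt.fst_sum, TrivSqZeroExt.snd_sum,
    Finset.sum_apply, Pi.single_apply] <;> rfl

lemma hasSquareZeroBasis_Sring : HasSquareZeroBasis k (xS k i) (yS k i) where
  mul_self_x := xS_mul_xS k i
  mul_y := yS_mul_yS k i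
  exists_coordElem_eq := exists_coordElem_eq_Sring k i
  eq_zero_of_coordElem_eq_zero a b c e h := by
    have h0 := (toModel_coordElem k i a b c e).symm.trans
      ((congrArg (toModel k i) h).trans (map_zero _))
    exact ⟨congrArg (·.1.1) h0, congrArg (·.1.2) h0,
      funext fun j => congrArg (fun z => (z.2 j).1) h0,
      funext fun j => congrArg (fun z => (z.2 j).2) h0⟩

end Sring

end SquareZeroSyzygy

theorem stmt10_general (k : Type) [Field k] (i n : ℕ)
    (B : Fin i → Matrix (Fin n) (Fin n) k)
    (d σ : (Fin n → Sring k i) →ₗ[Sring k i] (Fin n → Sring k i))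
    (hd : d = Matrix.mulVecLin (xS k i • (1 : Matrix (Fin n) (Fin n) (Sring k i)) +
      ∑ j, yS k i j • (B j).map (algebraMap k (Sring k i))))
    (hσ : σ = Matrix.mulVecLin (xS k i • (1 : Matrix (Fin n) (Fin n) (Sring k i)) -
      ∑ j, yS k i j • (B j).map (algebraMap k (Sring k i)))) :
    Nonempty ((↥(LinearMap.range d)) ≃ₗ[Sring k i]
      ((Fin n → Sring k i) ⧸ LinearMap.range σ)) := by
  subst hd hσ
  have hker := (SquareZeroSyzygy.hasSquareZeroBasis_Sring k i).ker_eq_range B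
  exact ⟨(LinearMap.quotKerEquivRange _).symm.trans (Submodule.quotEquivOfEq _ _ hker)⟩

/-- For the `S_i`-linear maps `∂, σ : S_iⁿ → S_iⁿ` given by the matrices
`x·I + Σ B_j·y_j` and `x·I − Σ B_j·y_j`, the image of `∂` (the first syzygy of `coker ∂`)
is isomorphic as an `S_i`-module to `coker σ`; hence a minimal complete resolution of
`coker ∂` is periodic of period at most 2. -/
theorem stmt10 (k : Type) [Field k] [CharZero k] (i n : ℕ) (hi : 2 ≤ i) (hn : 1 ≤ n)
    (B : Fin i → Matrix (Fin n) (Fin n) k)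
    (d σ : (Fin n → Sring k i) →ₗ[Sring k i] (Fin n → Sring k i))
    (hd : d = Matrix.mulVecLin (xS k i • (1 : Matrix (Fin n) (Fin n) (Sring k i)) +
      ∑ j, yS k i j • (B j).map (algebraMap k (Sring k i))))
    (hσ : σ = Matrix.mulVecLin (xS k i • (1 : Matrix (Fin n) (Fin n) (Sring k i)) -
      ∑ j, yS k i j • (B j).map (algebraMap k (Sring k i)))) :
    Nonempty ((↥(LinearMap.range d)) ≃ₗ[Sring k i]
      ((Fin n → Sring k i) ⧸ LinearMap.range σ)) :=
  stmt10_general k i n B d σ hd hσ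
end
end

section
/- Let i ≥ 2, n ≥ 1, and let A_1, …, A_i and B_1, …, B_i be n × n matrices with entries in k. If the S_i-modules coker(x·I_n + Σ_{j=1}^i A_j·y_j) and coker(x·I_n + Σ_{j=1}^i B_j·y_j) are isomorphic, then there exists an invertible n × n matrix P over k with P·A_j·P⁻¹ = B_j for all j = 1, …, i. -/
set_option synthInstance.maxHeartbeats 1000000
set_option maxHeartbeats 1000000

open MvPolynomial

noncomputable section

/-- The presentation map `S_iⁿ → S_iⁿ` given by the matrix `x·I_n + Σ_j C_j·y_j`. -/
abbrev presMap (k : Type) [Field k] (i n : ℕ) (C : Fin i → Matrix (Fin n) (Fin n) k) :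
    (Fin n → Sring k i) →ₗ[Sring k i] (Fin n → Sring k i) :=
  Matrix.mulVecLin (xS k i • (1 : Matrix (Fin n) (Fin n) (Sring k i)) +
    ∑ j, yS k i j • (C j).map (algebraMap k (Sring k i)))

/-- `coker(x·I_n + Σ_j C_j·y_j)` as an `S_i`-module. -/
abbrev Coker (k : Type) [Field k] (i n : ℕ) (C : Fin i → Matrix (Fin n) (Fin n) k) :=
  (Fin n → Sring k i) ⧸ LinearMap.range (presMap k i n C)

/-!
An isomorphism of cokernels lifts, `S_iⁿ` being free, to matrices `U, W` over `S_i` with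
`U·M_A = M_B·V`, `W·U ≡ 1 (mod M_A)` and `U·W ≡ 1 (mod M_B)`, where `M_C = x·I + Σ C_j·y_j`.
Reducing modulo `(x, y)` makes `P = Ū` invertible with inverse `W̄`. For `a ∈ k`, `b ∈ kⁱ` the
`k`-algebra map `S_i → k[ε]`, `x ↦ aε`, `y_j ↦ b_j ε`, sends `M_C` to `ε·(a + Σ b_j C_j)`; comparing
`ε`-coefficients in `U·M_A = M_B·V` gives `P·(a + Σ b_j A_j) = (a + Σ b_j B_j)·V̄`. Taking `a = 1,
b = 0` yields `P = V̄`, and then `a = 0, b = e_j` yields `P·A_j = B_j·P`.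
-/

open DualNumber TrivSqZeroExt

namespace Matrix

variable {R : Type*} [CommRing R] {l m m' n p q : Type*}

abbrev cokernel [Fintype p] (M : Matrix m p R) : Type _ := (m → R) ⧸ LinearMap.range M.mulVecLin

theorem exists_eq_mul_of_mkQ_mulVec_eq_zero [Fintype p] [DecidableEq p] [Fintype q]
    {X : Matrix m p R} {N : Matrix m q R}
    (h : ∀ v, Submodule.mkQ (LinearMap.range N.mulVecLin) (X *ᵥ v) = 0) :
    ∃ T : Matrix q p R, X = N * T := by
  obtain ⟨g, hg⟩ := Module.projective_lifting_property N.mulVecLin.rangeRestrict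
    (X.mulVecLin.codRestrict _ fun v => (Submodule.Quotient.mk_eq_zero _).1 (h v))
    N.mulVecLin.surjective_rangeRestrict
  refine ⟨LinearMap.toMatrix' g, ext_iff_mulVec.2 fun v => ?_⟩
  rw [← mulVec_mulVec, LinearMap.toMatrix'_mulVec]
  exact congr_arg Subtype.val (LinearMap.congr_fun hg v).symm

theorem exists_mkQ_mulVec_eq [Fintype m] [DecidableEq m] [Fintype p] [Fintype q]
    (M : Matrix m p R) (N : Matrix m' q R) (ψ : M.cokernel →ₗ[R] N.cokernel) :
    ∃ U : Matrix m' m R, ∀ v, Submodule.mkQ _ (U *ᵥ v) = ψ (Submodule.mkQ _ v) := by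
  obtain ⟨g, hg⟩ := Module.projective_lifting_property (Submodule.mkQ _)
    (ψ ∘ₗ Submodule.mkQ _) (Submodule.mkQ_surjective _)
  exact ⟨LinearMap.toMatrix' g, fun v => by
    rw [LinearMap.toMatrix'_mulVec]; exact LinearMap.congr_fun hg v⟩

theorem exists_mul_eq_one_add_mul_of_mkQ_mulVec [Fintype m] [DecidableEq m] [Fintype m']
    [Fintype p] [Fintype q] {M : Matrix m p R} {N : Matrix m' q R}
    {ψ : M.cokernel →ₗ[R] N.cokernel}
    {χ : N.cokernel →ₗ[R] M.cokernel}
    (hχψ : ∀ x, χ (ψ x) = x) {U : Matrix m' m R} {W : Matrix m m' R}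
    (hU : ∀ v, Submodule.mkQ _ (U *ᵥ v) = ψ (Submodule.mkQ _ v))
    (hW : ∀ v, Submodule.mkQ _ (W *ᵥ v) = χ (Submodule.mkQ _ v)) :
    ∃ T, W * U = 1 + M * T := by
  obtain ⟨T, hT⟩ := exists_eq_mul_of_mkQ_mulVec_eq_zero (X := W * U - 1) (N := M) fun v => by
    rw [sub_mulVec, one_mulVec, map_sub, ← mulVec_mulVec, hW, hU, hχψ, sub_self]
  exact ⟨T, eq_add_of_sub_eq' hT⟩

theorem exists_lift_of_linearEquiv_cokernel [Fintype m] [DecidableEq m] [Fintype m']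
    [DecidableEq m'] [Fintype p] [DecidableEq p] [Fintype q] {M : Matrix m p R} {N : Matrix m' q R}
    (φ : M.cokernel ≃ₗ[R] N.cokernel) :
    ∃ (U : Matrix m' m R) (W : Matrix m m' R), (∃ V, U * M = N * V) ∧
      (∃ T, W * U = 1 + M * T) ∧ ∃ T, U * W = 1 + N * T := by
  obtain ⟨U, hU⟩ := exists_mkQ_mulVec_eq M N φ.toLinearMap
  obtain ⟨W, hW⟩ := exists_mkQ_mulVec_eq N M φ.symm.toLinearMap
  refine ⟨U, W, exists_eq_mul_of_mkQ_mulVec_eq_zero fun v => ?_,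
    exists_mul_eq_one_add_mul_of_mkQ_mulVec φ.symm_apply_apply hU hW,
    exists_mul_eq_one_add_mul_of_mkQ_mulVec φ.apply_symm_apply hW hU⟩
  have hMv : Submodule.mkQ (LinearMap.range M.mulVecLin) (M *ᵥ v) = 0 :=
    (Submodule.Quotient.mk_eq_zero _).2 (LinearMap.mem_range_self _ v)
  rw [← mulVec_mulVec, hU, hMv, map_zero]

theorem map_snd_mul_eps_smul [Fintype m] (Q : Matrix l m R[ε]) (N : Matrix m n R) :
    (Q * ((ε : R[ε]) • N.map (algebraMap R R[ε]))).map snd = Q.map fst * N := by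
  ext a c
  simp [mul_apply, snd_sum, fst_sum, algebraMap_eq_inl, mul_comm]

theorem map_snd_eps_smul_mul [Fintype m] (N : Matrix l m R) (Q : Matrix m n R[ε]) :
    (((ε : R[ε]) • N.map (algebraMap R R[ε])) * Q).map snd = N * Q.map fst := by
  ext a c
  simp [mul_apply, snd_sum, fst_sum, algebraMap_eq_inl, mul_comm]

end Matrix

namespace Sring

variable {k : Type} [Field k] {i : ℕ}

section lift

variable {R : Type*} [CommRing R] [Algebra k R]

def lift (a : R) (b : Fin i → R) (ha : a * a = 0) (hb : ∀ j l, b j * b l = 0) :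
    Sring k i →ₐ[k] R :=
  Ideal.Quotient.liftₐ _ (aeval (Fin.cons a b)) fun _ hp =>
    RingHom.mem_ker.1 <| (Ideal.span_le.2 <| by
      rintro q (rfl | ⟨j, l, rfl⟩) <;> simp [pow_two, ha, hb]) hp

variable {a : R} {b : Fin i → R} {ha : a * a = 0} {hb : ∀ j l, b j * b l = 0}

@[simp]
theorem lift_mk (p : MvPolynomial (Fin (i + 1)) k) :
    lift a b ha hb (Ideal.Quotient.mk _ p) = aeval (Fin.cons a b) p :=
  Ideal.Quotient.lift_mk _ _ _

@[simp]
theorem lift_xS : lift a b ha hb (xS k i) = a := by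
  simp

@[simp]
theorem lift_yS (j : Fin i) : lift a b ha hb (yS k i j) = b j := by
  simp

theorem algHom_ext {f g : Sring k i →ₐ[k] R} (hx : f (xS k i) = g (xS k i))
    (hy : ∀ j, f (yS k i j) = g (yS k i j)) : f = g :=
  Ideal.Quotient.algHom_ext _ <| MvPolynomial.algHom_ext <| Fin.cases hx hy

end lift

def residue : Sring k i →ₐ[k] k :=
  lift 0 0 (mul_zero 0) fun _ _ => mul_zero 0

def tangent (a : k) (b : Fin i → k) : Sring k i →ₐ[k] k[ε] :=
  lift (a • ε) (fun j => b j • ε) (by simp) fun _ _ => by simp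

@[simp]
theorem fst_tangent (a : k) (b : Fin i → k) (s : Sring k i) : (tangent a b s).fst = residue s :=
  AlgHom.congr_fun (φ₁ := (fstHom k k k).comp (tangent a b)) (φ₂ := residue)
    (algHom_ext (by simp [tangent, residue]) fun j => by simp [tangent, residue]) s

end Sring

def presMat (k : Type) [Field k] (i n : ℕ) (C : Fin i → Matrix (Fin n) (Fin n) k) :
    Matrix (Fin n) (Fin n) (Sring k i) :=
  xS k i • 1 + ∑ j, yS k i j • (C j).map (algebraMap k (Sring k i))

section presMat

variable {k : Type} [Field k] {i n : ℕ} {C D : Fin i → Matrix (Fin n) (Fin n) k}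
  {U V W T : Matrix (Fin n) (Fin n) (Sring k i)}

theorem map_presMat {R : Type*} [CommRing R] [Algebra k R] (f : Sring k i →ₐ[k] R) :
    (presMat k i n C).map f =
      f (xS k i) • 1 + ∑ j, f (yS k i j) • (C j).map (algebraMap k R) := by
  ext m l
  simp [presMat, Matrix.one_apply, apply_ite f, Matrix.sum_apply]

theorem map_residue_presMat : (presMat k i n C).map Sring.residue = 0 := by
  simp [map_presMat, Sring.residue]

theorem map_tangent_presMat (a : k) (b : Fin i → k) :
    (presMat k i n C).map (Sring.tangent a b) =
      (ε : k[ε]) • (a • 1 + ∑ j, b j • C j).map (algebraMap k k[ε]) := by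
  rw [map_presMat]
  refine Matrix.ext fun m l => ?_
  simp only [Sring.tangent, Matrix.add_apply, Matrix.smul_apply, Matrix.map_apply,
    Matrix.sum_apply, Matrix.one_apply, Sring.lift_xS, Sring.lift_yS]
  simp [Algebra.smul_def, apply_ite, mul_add, Finset.mul_sum, mul_comm, mul_left_comm]

theorem map_residue_mul_eq_of_mul_presMat_eq (h : U * presMat k i n C = presMat k i n D * V)
    (a : k) (b : Fin i → k) :
    U.map Sring.residue * (a • 1 + ∑ j, b j • C j) =
      (a • 1 + ∑ j, b j • D j) * V.map Sring.residue := by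
  have h' := congr_arg (fun X => ((Sring.tangent a b).mapMatrix X).map snd) h
  simp only [map_mul, AlgHom.mapMatrix_apply, map_tangent_presMat, Matrix.map_snd_mul_eps_smul,
    Matrix.map_snd_eps_smul_mul, Matrix.map_map] at h'
  simpa [Function.comp_def] using h'

theorem map_residue_mul_eq_mul_map_residue (h : U * presMat k i n C = presMat k i n D * V)
    (j : Fin i) : U.map Sring.residue * C j = D j * U.map Sring.residue := by
  have hUV : U.map Sring.residue = V.map Sring.residue := by
    simpa using map_residue_mul_eq_of_mul_presMat_eq h 1 0
  simpa [Pi.single_apply, hUV] using map_residue_mul_eq_of_mul_presMat_eq h 0 (Pi.single j 1)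

theorem map_residue_mul_eq_one (h : W * U = 1 + presMat k i n C * T) :
    W.map Sring.residue * U.map Sring.residue = 1 := by
  have h' := congr_arg Sring.residue.mapMatrix h
  simp only [map_mul, map_add, map_one, AlgHom.mapMatrix_apply, map_residue_presMat] at h'
  simpa using h'

end presMat

theorem stmt14_general (k : Type) [Field k] (i n : ℕ)
    (A B : Fin i → Matrix (Fin n) (Fin n) k)
    (h : Nonempty (Coker k i n A ≃ₗ[Sring k i] Coker k i n B)) :
    ∃ P : Matrix (Fin n) (Fin n) k, IsUnit P ∧ ∀ j, P * A j * P⁻¹ = B j := by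
  obtain ⟨φ⟩ := h
  obtain ⟨U, W, ⟨_, hUV⟩, ⟨_, hWU⟩, ⟨_, hUW⟩⟩ :=
    Matrix.exists_lift_of_linearEquiv_cokernel (M := presMat k i n A)
      (N := presMat k i n B) φ
  have hP : U.map Sring.residue * W.map Sring.residue = 1 := map_residue_mul_eq_one hUW
  refine ⟨_, ⟨⟨_, _, hP, map_residue_mul_eq_one hWU⟩, rfl⟩, fun j => ?_⟩
  rw [Matrix.inv_eq_right_inv hP, map_residue_mul_eq_mul_map_residue hUV, mul_assoc, hP, mul_one]

/-- If `coker(x·I + Σ A_j·y_j) ≅ coker(x·I + Σ B_j·y_j)` as `S_i`-modules,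
then there is an invertible matrix `P` over `k` with `P·A_j·P⁻¹ = B_j` for all `j`. -/
theorem stmt14 (k : Type) [Field k] [CharZero k] (i n : ℕ) (hi : 2 ≤ i) (hn : 1 ≤ n)
    (A B : Fin i → Matrix (Fin n) (Fin n) k)
    (h : Nonempty (Coker k i n A ≃ₗ[Sring k i] Coker k i n B)) :
    ∃ P : Matrix (Fin n) (Fin n) k, IsUnit P ∧ ∀ j, P * A j * P⁻¹ = B j :=
  stmt14_general k i n A B h
end
end
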